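/- arXiv:math/0703300 — 6 statements merged into one kernel-verified Lean document; each statement's English description precedes it below -/
import Mathlib

section
/- Suppose in addition there exist constants b > 0 and C > 0 such that lim_{w→0+} w^{−(b−1)} f(w) = C. Then for every integer r with 0 ≤ r ≤ m+1, the Laplace-transform asymptotic (Watson's lemma) lim_{h→∞} h^{r+b} μ_r(h) = C · Γ(r+b) holds, where Γ is the Gamma function. -/
/-!
Near `0` the function `g(w) = w^r f(w)` behaves like `C w^(s-1)` with `s = r + b`. Cut `g` at a
small `δ`. On `(0, δ]` the substitution `t = h w` turns `h^s ∫ e^(-hw) g(w) dw` into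
`∫ e^(-t) t^(s-1) G(t/h) dt` with `G(w) = w^(-(s-1)) g(w)` bounded and tending to `C`, so
dominated convergence gives `C Γ(s)`. Beyond `δ` the integral is `O(e^(-δh))`, which beats every
power of `h`. The moments of order `0` and `m + 2` make `g` integrable.
-/

open MeasureTheory Set Filter

/-- The exponentially tilted moment `μ_r(h) = ∫_0^∞ w^r e^{-hw} f(w) dw`. -/
noncomputable def tiltedMoment (f : ℝ → ℝ) (r : ℕ) (h : ℝ) : ℝ :=
  ∫ w in Set.Ioi (0 : ℝ), w ^ r * Real.exp (-h * w) * f w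

open Real Topology

noncomputable def laplaceTransform (g : ℝ → ℝ) (h : ℝ) : ℝ :=
  ∫ w in Ioi 0, exp (-h * w) * g w

lemma tiltedMoment_eq_laplaceTransform (f : ℝ → ℝ) (r : ℕ) :
    tiltedMoment f r = laplaceTransform (fun w => w ^ r * f w) := by
  ext h
  exact integral_congr_ae (.of_forall fun w => by ring)

lemma integrableOn_Ioi_pow_mul_of_le {f : ℝ → ℝ} {n r : ℕ} (hf : IntegrableOn f (Ioi 0))
    (hfn : IntegrableOn (fun w => w ^ n * f w) (Ioi 0)) (hrn : r ≤ n) :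
    IntegrableOn (fun w => w ^ r * f w) (Ioi 0) := by
  refine (hf.norm.add hfn.norm).mono'
    ((continuous_pow r).aestronglyMeasurable.mul hf.aestronglyMeasurable) ?_
  filter_upwards [ae_restrict_mem measurableSet_Ioi] with w (hw : 0 < w)
  rw [Pi.add_apply, norm_mul, norm_mul, norm_of_nonneg (pow_nonneg hw.le r),
    norm_of_nonneg (pow_nonneg hw.le n)]
  rcases le_total w 1 with hw1 | hw1
  · nlinarith [pow_le_one₀ hw.le hw1 (n := r), norm_nonneg (f w), pow_nonneg hw.le n]
  · nlinarith [pow_le_pow_right₀ hw1 hrn, norm_nonneg (f w)]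

lemma integrableOn_Ioi_exp_neg_mul_mul {g : ℝ → ℝ} {h : ℝ} (hg : IntegrableOn g (Ioi 0))
    (hh : 0 ≤ h) : IntegrableOn (fun w => exp (-h * w) * g w) (Ioi 0) := by
  refine hg.bdd_mul (c := 1) (by fun_prop) ?_
  filter_upwards [ae_restrict_mem measurableSet_Ioi] with w (hw : 0 < w)
  rw [norm_of_nonneg (exp_pos _).le, exp_le_one_iff]
  nlinarith

lemma rpow_mul_laplaceTransform (g : ℝ → ℝ) {h : ℝ} (hh : 0 < h) (s : ℝ) :
    h ^ s * laplaceTransform g h =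
      ∫ t in Ioi 0, exp (-t) * t ^ (s - 1) * ((t / h) ^ (-(s - 1)) * g (t / h)) := by
  have hsub := integral_comp_mul_left_Ioi (fun t => exp (-t) * g (t / h)) 0 hh
  simp only [mul_zero, smul_eq_mul, ← neg_mul, mul_div_cancel_left₀ _ hh.ne'] at hsub
  rw [laplaceTransform, hsub, ← mul_assoc, ← rpow_neg_one, ← rpow_add hh, ← integral_const_mul]
  refine integral_congr_ae ?_
  filter_upwards [ae_restrict_mem measurableSet_Ioi] with t (ht : 0 < t)
  have hts : 0 < t ^ (s - 1) := rpow_pos_of_pos ht _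
  rw [rpow_neg (div_pos ht hh).le, div_rpow ht.le hh.le, ← sub_eq_add_neg]
  field_simp

lemma tendsto_div_atTop_nhdsGT_zero {t : ℝ} (ht : 0 < t) :
    Tendsto (fun h : ℝ => t / h) atTop (𝓝[>] 0) :=
  tendsto_nhdsWithin_iff.mpr ⟨tendsto_const_nhds.div_atTop tendsto_id,
    (eventually_gt_atTop 0).mono fun _ hh => div_pos ht hh⟩

lemma quasiMeasurePreserving_div_const_Ioi {h : ℝ} (hh : 0 < h) :
    Measure.QuasiMeasurePreserving (fun t : ℝ => t / h)
      (volume.restrict (Ioi 0)) (volume.restrict (Ioi 0)) := by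
  simp_rw [div_eq_inv_mul]
  exact (Measure.quasiMeasurePreserving_smul volume (inv_ne_zero hh.ne')).restrict
    fun t (ht : 0 < t) => mul_pos (inv_pos.mpr hh) ht

lemma tendsto_rpow_mul_laplaceTransform_of_bounded {g : ℝ → ℝ} {s C M : ℝ}
    (hg : AEStronglyMeasurable g (volume.restrict (Ioi 0))) (hs : 0 < s)
    (hbdd : ∀ w, 0 < w → ‖w ^ (-(s - 1)) * g w‖ ≤ M)
    (hlim : Tendsto (fun w => w ^ (-(s - 1)) * g w) (𝓝[>] 0) (𝓝 C)) :
    Tendsto (fun h => h ^ s * laplaceTransform g h) atTop (𝓝 (C * Gamma s)) := by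
  set G := fun w => w ^ (-(s - 1)) * g w
  have hG : AEStronglyMeasurable G (volume.restrict (Ioi 0)) :=
    (measurable_id.pow_const _).aestronglyMeasurable.mul hg
  have hGamma : C * Gamma s = ∫ t in Ioi 0, exp (-t) * t ^ (s - 1) * C := by
    rw [integral_mul_const, Gamma_eq_integral hs, mul_comm]
  rw [hGamma]
  refine (tendsto_integral_filter_of_dominated_convergence
    (F := fun h t => exp (-t) * t ^ (s - 1) * G (t / h)) (fun t => exp (-t) * t ^ (s - 1) * M)
    ?_ ?_ ((GammaIntegral_convergent hs).mul_const M) ?_).congr' ?_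
  · filter_upwards [eventually_gt_atTop 0] with h hh
    exact (by fun_prop : Measurable fun t => exp (-t) * t ^ (s - 1)).aestronglyMeasurable.mul
      (hG.comp_quasiMeasurePreserving (quasiMeasurePreserving_div_const_Ioi hh))
  · filter_upwards [eventually_gt_atTop 0] with h hh
    filter_upwards [ae_restrict_mem measurableSet_Ioi] with t (ht : 0 < t)
    rw [norm_mul, norm_of_nonneg (by positivity)]
    exact mul_le_mul_of_nonneg_left (hbdd _ (div_pos ht hh)) (by positivity)
  · filter_upwards [ae_restrict_mem measurableSet_Ioi] with t (ht : 0 < t)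
    exact tendsto_const_nhds.mul (hlim.comp (tendsto_div_atTop_nhdsGT_zero ht))
  · filter_upwards [eventually_gt_atTop 0] with h hh
    exact (rpow_mul_laplaceTransform g hh s).symm

lemma tendsto_rpow_mul_laplaceTransform_of_eq_zero {g : ℝ → ℝ} {δ : ℝ}
    (hg : IntegrableOn g (Ioi 0)) (hδ : 0 < δ) (hzero : ∀ w ≤ δ, g w = 0) (s : ℝ) :
    Tendsto (fun h => h ^ s * laplaceTransform g h) atTop (𝓝 0) := by
  set K := ∫ w in Ioi 0, ‖g w‖
  have hbound : ∀ h ≥ 0, ‖laplaceTransform g h‖ ≤ exp (-δ * h) * K := by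
    intro h hh
    rw [← integral_const_mul]
    refine norm_integral_le_of_norm_le (hg.norm.const_mul _) ?_
    filter_upwards with w
    by_cases hwδ : w ≤ δ
    · simp [hzero w hwδ]
    · rw [norm_mul, norm_of_nonneg (exp_pos _).le]
      exact mul_le_mul_of_nonneg_right (exp_le_exp.mpr (by nlinarith)) (norm_nonneg _)
  have hdecay := (tendsto_rpow_mul_exp_neg_mul_atTop_nhds_zero s δ hδ).mul_const K
  rw [zero_mul] at hdecay
  refine squeeze_zero_norm' ?_ hdecay
  filter_upwards [eventually_ge_atTop 0] with h hh
  rw [norm_mul, norm_of_nonneg (rpow_nonneg hh s), mul_assoc]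
  exact mul_le_mul_of_nonneg_left (hbound h hh) (rpow_nonneg hh s)

theorem tendsto_rpow_mul_laplaceTransform {g : ℝ → ℝ} {s C : ℝ}
    (hg : IntegrableOn g (Ioi 0)) (hs : 0 < s)
    (hlim : Tendsto (fun w => w ^ (-(s - 1)) * g w) (𝓝[>] 0) (𝓝 C)) :
    Tendsto (fun h => h ^ s * laplaceTransform g h) atTop (𝓝 (C * Gamma s)) := by
  obtain ⟨δ, hδ, hnear⟩ : ∃ δ > 0, Ioc 0 δ ⊆ {w | ‖w ^ (-(s - 1)) * g w‖ < ‖C‖ + 1} :=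
    mem_nhdsGT_iff_exists_Ioc_subset.mp (hlim.norm.eventually (gt_mem_nhds (lt_add_one _)))
  have hnear_lim : Tendsto (fun w => w ^ (-(s - 1)) * (Iic δ).indicator g w) (𝓝[>] 0) (𝓝 C) := by
    refine hlim.congr' ?_
    filter_upwards [Ioc_mem_nhdsGT hδ] with w hw
    rw [indicator_of_mem (show w ∈ Iic δ from hw.2)]
  have hnear_bdd : ∀ w, 0 < w → ‖w ^ (-(s - 1)) * (Iic δ).indicator g w‖ ≤ ‖C‖ + 1 := by
    intro w hw
    by_cases hwδ : w ≤ δ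
    · rw [indicator_of_mem (show w ∈ Iic δ from hwδ)]
      exact (hnear ⟨hw, hwδ⟩).le
    · simp only [indicator_of_notMem (show w ∉ Iic δ from hwδ), mul_zero, norm_zero]
      positivity
  have hsplit : ∀ h ≥ 0, laplaceTransform g h =
      laplaceTransform ((Iic δ).indicator g) h + laplaceTransform ((Ioi δ).indicator g) h := by
    intro h hh
    rw [laplaceTransform, laplaceTransform, laplaceTransform,
      ← integral_add (integrableOn_Ioi_exp_neg_mul_mul (hg.indicator measurableSet_Iic) hh)
        (integrableOn_Ioi_exp_neg_mul_mul (hg.indicator measurableSet_Ioi) hh)]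
    simp_rw [← mul_add, ← compl_Iic, indicator_self_add_compl_apply]
  have hsum := (tendsto_rpow_mul_laplaceTransform_of_bounded
    (hg.indicator measurableSet_Iic).aestronglyMeasurable hs hnear_bdd hnear_lim).add
    (tendsto_rpow_mul_laplaceTransform_of_eq_zero (hg.indicator measurableSet_Ioi) hδ
      (fun w hw => indicator_of_notMem (not_lt.mpr hw) g) s)
  rw [add_zero] at hsum
  refine hsum.congr' ?_
  filter_upwards [eventually_ge_atTop 0] with h hh
  rw [hsplit h hh, mul_add]

theorem tiltedMoment_watson_general
    (m : ℕ) (f : ℝ → ℝ)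
    (hf_prob : ∫ w in Set.Ioi (0 : ℝ), f w = 1)
    (hf_mom : IntegrableOn (fun w => w ^ (m + 2) * f w) (Set.Ioi 0))
    (b C : ℝ) (hb : 0 < b)
    (hlim : Tendsto (fun w : ℝ => w ^ (-(b - 1)) * f w)
      (nhdsWithin 0 (Set.Ioi 0)) (nhds C)) :
    ∀ r : ℕ, r ≤ m + 1 →
      Tendsto (fun h : ℝ => h ^ ((r : ℝ) + b) * tiltedMoment f r h)
        atTop (nhds (C * Real.Gamma ((r : ℝ) + b))) := by
  intro r hr
  have hf : IntegrableOn f (Ioi 0) := by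
    by_contra hnot
    rw [integral_undef hnot] at hf_prob
    exact zero_ne_one hf_prob
  have hlim_r : Tendsto (fun w => w ^ (-((r + b) - 1)) * (w ^ r * f w)) (𝓝[>] 0) (𝓝 C) := by
    refine hlim.congr' ?_
    filter_upwards [self_mem_nhdsWithin] with w (hw : 0 < w)
    rw [← mul_assoc, ← rpow_natCast, ← rpow_add hw]
    ring_nf
  rw [tiltedMoment_eq_laplaceTransform]
  exact tendsto_rpow_mul_laplaceTransform (integrableOn_Ioi_pow_mul_of_le hf hf_mom (by omega))
    (by positivity) hlim_r

/-- Watson's lemma: if `w^{-(b-1)} f(w) → C` as `w → 0+` for some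
`b > 0` and `C > 0`, then for every `0 ≤ r ≤ m+1`,
`h^{r+b} μ_r(h) → C · Γ(r+b)` as `h → ∞`. -/
theorem tiltedMoment_watson
    (m : ℕ) (hm : 1 ≤ m) (f : ℝ → ℝ)
    (hf_meas : Measurable f)
    (hf_nonneg : ∀ w, 0 ≤ f w)
    (hf_supp : ∀ w, w ≤ 0 → f w = 0)
    (hf_prob : ∫ w in Set.Ioi (0 : ℝ), f w = 1)
    (hf_mom : IntegrableOn (fun w => w ^ (m + 2) * f w) (Set.Ioi 0))
    (b C : ℝ) (hb : 0 < b) (hC : 0 < C)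
    (hlim : Tendsto (fun w : ℝ => w ^ (-(b - 1)) * f w)
      (nhdsWithin 0 (Set.Ioi 0)) (nhds C)) :
    ∀ r : ℕ, r ≤ m + 1 →
      Tendsto (fun h : ℝ => h ^ ((r : ℝ) + b) * tiltedMoment f r h)
        atTop (nhds (C * Real.Gamma ((r : ℝ) + b))) :=
  tiltedMoment_watson_general m f hf_prob hf_mom b C hb hlim
end

section
/- Suppose in addition there exist constants b > 0 and C > 0 such that lim_{w→0+} w^{−(b−1)} f(w) = C. Then for every integer r with 0 ≤ r ≤ m, lim_{h→∞} h · ψ*(r,h) = r + b. -/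
open MeasureTheory Set Filter

/-- `ψ*(r,h) = μ_{r+1}(h) / μ_r(h)`. -/
noncomputable def psiStar (f : ℝ → ℝ) (r : ℕ) (h : ℝ) : ℝ :=
  tiltedMoment f (r + 1) h / tiltedMoment f r h

/-! The tilted moment `μ_r(h)` is the Laplace transform of `φ(w) = w^r f(w)`, and
`φ(w) ∼ C w^{s-1}` as `w → 0+` with `s = r + b`. Splitting at a small `δ`, the part of the
transform over `[δ, ∞)` is `O(e^{-δh})`, while on `(0, δ)` the substitution `t = hw` gives
`h^s ∫_0^δ e^{-hw} φ(w) dw = ∫_0^{hδ} e^{-t} t^{s-1} g(t/h) dt` with `g(w) = w^{1-s} φ(w)`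
bounded and tending to `C`; dominated convergence yields `h^s μ_r(h) → C Γ(s)`. The ratio of
two consecutive such asymptotics is `h ψ*(r,h) → Γ(s+1)/Γ(s) = s`. -/

open Real Topology

section LaplaceAbelian

variable {φ G : ℝ → ℝ} {s δ C M : ℝ}

lemma integrableOn_exp_neg_mul_mul (hφ : IntegrableOn φ (Ioi 0)) {h : ℝ} (hh : 0 ≤ h) :
    IntegrableOn (fun w => exp (-h * w) * φ w) (Ioi 0) := by
  refine hφ.bdd_mul (c := 1) (by fun_prop) ?_
  filter_upwards [ae_restrict_mem measurableSet_Ioi] with w (hw : 0 < w)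
  rw [norm_of_nonneg (exp_pos _).le, exp_le_one_iff]
  nlinarith

lemma tendsto_rpow_mul_integral_Ici_exp_neg_mul (hφ : IntegrableOn φ (Ici δ)) (hδ : 0 < δ)
    (s : ℝ) : Tendsto (fun h => h ^ s * ∫ w in Ici δ, exp (-h * w) * φ w) atTop (𝓝 0) := by
  set K := ∫ w in Ici δ, ‖φ w‖
  have hdecay := (tendsto_rpow_mul_exp_neg_mul_atTop_nhds_zero s δ hδ).mul_const K
  rw [zero_mul] at hdecay
  refine squeeze_zero_norm' ?_ hdecay
  filter_upwards [eventually_ge_atTop 0] with h hh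
  have hint : ‖∫ w in Ici δ, exp (-h * w) * φ w‖ ≤ exp (-δ * h) * K := by
    rw [← integral_const_mul]
    refine norm_integral_le_of_norm_le (hφ.norm.const_mul _) ?_
    filter_upwards [ae_restrict_mem measurableSet_Ici] with w (hw : δ ≤ w)
    rw [norm_mul, norm_of_nonneg (exp_pos _).le]
    exact mul_le_mul_of_nonneg_right (exp_le_exp.2 (by nlinarith)) (norm_nonneg _)
  rw [norm_mul, norm_of_nonneg (rpow_nonneg hh _), mul_assoc]
  gcongr

lemma integral_Ioi_eq_integral_indicator_Iio_add_integral_Ici {F : ℝ → ℝ}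
    (hF : IntegrableOn F (Ioi 0)) (hδ : 0 < δ) :
    ∫ w in Ioi 0, F w = (∫ w in Ioi 0, (Iio δ).indicator F w) + ∫ w in Ici δ, F w := by
  rw [setIntegral_indicator measurableSet_Iio, Ioi_inter_Iio, ← Ioo_union_Ici_eq_Ioi hδ,
    setIntegral_union (Iio_disjoint_Ici le_rfl |>.mono_left Ioo_subset_Iio_self)
      measurableSet_Ici (hF.mono_set Ioo_subset_Ioi_self) (hF.mono_set (Ici_subset_Ioi.2 hδ))]

lemma rpow_mul_integral_exp_neg_mul_eq (φ : ℝ → ℝ) {h : ℝ} (hh : 0 < h) (s : ℝ) :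
    h ^ s * ∫ w in Ioi 0, exp (-h * w) * φ w =
      ∫ t in Ioi 0, exp (-t) * t ^ (s - 1) * ((t / h) ^ (1 - s) * φ (t / h)) := by
  have hpt : ∀ w ∈ Ioi (0 : ℝ),
      exp (-(h * w)) * (h * w) ^ (s - 1) * ((h * w / h) ^ (1 - s) * φ (h * w / h)) =
        h ^ (s - 1) * (exp (-h * w) * φ w) := by
    intro w (hw : 0 < w)
    have hcancel : w ^ (s - 1) * w ^ (1 - s) = 1 := by
      rw [← rpow_add hw, sub_add_sub_cancel', sub_self, rpow_zero]
    rw [mul_div_cancel_left₀ _ hh.ne', mul_rpow hh.le hw.le, neg_mul]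
    linear_combination h ^ (s - 1) * exp (-(h * w)) * φ w * hcancel
  have hsub := integral_comp_mul_left_Ioi
    (fun t => exp (-t) * t ^ (s - 1) * ((t / h) ^ (1 - s) * φ (t / h))) 0 hh
  rw [mul_zero, setIntegral_congr_fun measurableSet_Ioi hpt, integral_const_mul, smul_eq_mul,
    eq_inv_mul_iff_mul_eq₀ hh.ne'] at hsub
  rw [← hsub, rpow_sub_one hh.ne']
  field_simp

lemma tendsto_integral_exp_neg_mul_rpow_mul_comp_div (hs : 0 < s) (hG : Measurable G)
    (hbdd : ∀ w, 0 < w → ‖G w‖ ≤ M) (hlim : Tendsto G (𝓝[>] 0) (𝓝 C)) :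
    Tendsto (fun h => ∫ t in Ioi 0, exp (-t) * t ^ (s - 1) * G (t / h)) atTop
      (𝓝 (C * Gamma s)) := by
  rw [mul_comm, Gamma_eq_integral hs, ← integral_mul_const]
  refine tendsto_integral_filter_of_dominated_convergence (fun t => exp (-t) * t ^ (s - 1) * M)
    (Eventually.of_forall fun h => by fun_prop) ?_ ((GammaIntegral_convergent hs).mul_const M) ?_
  · filter_upwards [eventually_gt_atTop 0] with h hh
    filter_upwards [ae_restrict_mem measurableSet_Ioi] with t (ht : 0 < t)
    rw [norm_mul, norm_of_nonneg (by positivity)]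
    gcongr
    exact hbdd _ (div_pos ht hh)
  · filter_upwards [ae_restrict_mem measurableSet_Ioi] with t (ht : 0 < t)
    have hdiv : Tendsto (fun h => t / h) atTop (𝓝[>] 0) :=
      tendsto_nhdsWithin_iff.2 ⟨tendsto_const_nhds.div_atTop tendsto_id,
        (eventually_gt_atTop 0).mono fun h hh => div_pos ht hh⟩
    exact (hlim.comp hdiv).const_mul _

/-- Abelian theorem for the Laplace transform (the leading term of Watson's lemma). -/
theorem tendsto_rpow_mul_integral_exp_neg_mul (hφm : Measurable φ)
    (hφ : IntegrableOn φ (Ioi 0)) (hs : 0 < s)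
    (hlim : Tendsto (fun w => w ^ (1 - s) * φ w) (𝓝[>] 0) (𝓝 C)) :
    Tendsto (fun h => h ^ s * ∫ w in Ioi 0, exp (-h * w) * φ w) atTop (𝓝 (C * Gamma s)) := by
  obtain ⟨δ, hδ, hbdd⟩ :
      ∃ δ > 0, Ioo 0 δ ⊆ {w | ‖w ^ (1 - s) * φ w‖ < ‖C‖ + 1} :=
    mem_nhdsGT_iff_exists_Ioo_subset.1 (hlim.norm.eventually_lt_const (lt_add_one _))
  set φδ := (Iio δ).indicator φ
  have hsplit : ∀ h ≥ 0, ∫ w in Ioi 0, exp (-h * w) * φ w =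
      (∫ w in Ioi 0, exp (-h * w) * φδ w) + ∫ w in Ici δ, exp (-h * w) * φ w := by
    intro h hh
    simpa only [indicator_mul_right] using
      integral_Ioi_eq_integral_indicator_Iio_add_integral_Ici
        (integrableOn_exp_neg_mul_mul hφ hh) hδ
  have hhead : Tendsto (fun h => h ^ s * ∫ w in Ioi 0, exp (-h * w) * φδ w) atTop
      (𝓝 (C * Gamma s)) := by
    refine (tendsto_integral_exp_neg_mul_rpow_mul_comp_div (G := fun w => w ^ (1 - s) * φδ w)
      (M := ‖C‖ + 1) hs ((measurable_id.pow_const _).mul (hφm.indicator measurableSet_Iio))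
      ?_ ?_).congr' ?_
    · intro w hw
      by_cases hwδ : w < δ
      · simp only [φδ, indicator_of_mem (show w ∈ Iio δ from hwδ)]
        exact (hbdd ⟨hw, hwδ⟩).le
      · simp [φδ, indicator_of_notMem (show w ∉ Iio δ from hwδ)]
        positivity
    · refine hlim.congr' ?_
      filter_upwards [nhdsWithin_le_nhds (Iio_mem_nhds hδ)] with w (hw : w < δ)
      simp [φδ, indicator_of_mem (show w ∈ Iio δ from hw)]
    · filter_upwards [eventually_gt_atTop 0] with h hh
      exact (rpow_mul_integral_exp_neg_mul_eq φδ hh s).symm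
  have htail :=
    tendsto_rpow_mul_integral_Ici_exp_neg_mul (hφ.mono_set (Ici_subset_Ioi.2 hδ)) hδ s
  refine (add_zero (C * Gamma s) ▸ hhead.add htail).congr' ?_
  filter_upwards [eventually_ge_atTop 0] with h hh
  rw [hsplit h hh, mul_add]

end LaplaceAbelian

lemma integrableOn_pow_mul_of_le {f : ℝ → ℝ} {n k : ℕ} (hf : IntegrableOn f (Ioi 0))
    (hfn : IntegrableOn (fun w => w ^ n * f w) (Ioi 0)) (hk : k ≤ n) :
    IntegrableOn (fun w => w ^ k * f w) (Ioi 0) := by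
  refine (hf.norm.add hfn.norm).mono'
    ((continuous_pow k).aestronglyMeasurable.mul hf.aestronglyMeasurable) ?_
  filter_upwards [ae_restrict_mem measurableSet_Ioi] with w (hw : 0 < w)
  have hpow : w ^ k ≤ 1 + w ^ n := by
    rcases le_total w 1 with hw1 | hw1
    · linarith [pow_le_one₀ hw.le hw1 (n := k), pow_nonneg hw.le n]
    · linarith [pow_le_pow_right₀ hw1 hk]
  simp only [Pi.add_apply, norm_mul, norm_pow, norm_of_nonneg hw.le]
  nlinarith [norm_nonneg (f w)]

lemma tendsto_rpow_mul_tiltedMoment {f : ℝ → ℝ} (hf_meas : Measurable f) {r : ℕ}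
    (hint : IntegrableOn (fun w => w ^ r * f w) (Ioi 0)) {b C : ℝ} (hb : 0 < b)
    (hlim : Tendsto (fun w : ℝ => w ^ (-(b - 1)) * f w) (𝓝[>] 0) (𝓝 C)) :
    Tendsto (fun h => h ^ ((r : ℝ) + b) * tiltedMoment f r h) atTop
      (𝓝 (C * Gamma (r + b))) := by
  have hμ : ∀ h, tiltedMoment f r h = ∫ w in Ioi 0, exp (-h * w) * (w ^ r * f w) := by
    intro h
    unfold tiltedMoment
    congr 1 with w
    ring
  have hlim' : Tendsto (fun w : ℝ => w ^ (1 - (r + b)) * (w ^ r * f w)) (𝓝[>] 0) (𝓝 C) := by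
    refine hlim.congr' ?_
    filter_upwards [self_mem_nhdsWithin] with w (hw : 0 < w)
    rw [← mul_assoc, ← rpow_natCast, ← rpow_add hw]
    ring_nf
  simpa only [hμ] using
    tendsto_rpow_mul_integral_exp_neg_mul (by fun_prop) hint (by positivity) hlim'

lemma tendsto_mul_psiStar {f : ℝ → ℝ} {r : ℕ} {s L : ℝ} (hs : 0 < s) (hL : L ≠ 0)
    (hμ : Tendsto (fun h => h ^ s * tiltedMoment f r h) atTop (𝓝 (L * Gamma s)))
    (hμ' : Tendsto (fun h => h ^ (s + 1) * tiltedMoment f (r + 1) h) atTop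
      (𝓝 (L * Gamma (s + 1)))) :
    Tendsto (fun h => h * psiStar f r h) atTop (𝓝 s) := by
  have hΓ : L * Gamma (s + 1) / (L * Gamma s) = s := by
    rw [Gamma_add_one hs.ne']
    field_simp [(Gamma_pos_of_pos hs).ne']
  refine hΓ ▸ (hμ'.div hμ (mul_ne_zero hL (Gamma_pos_of_pos hs).ne')).congr' ?_
  filter_upwards [eventually_gt_atTop 0] with h hh
  rw [Pi.div_apply, rpow_add_one hh.ne', psiStar, mul_assoc,
    mul_div_mul_left _ _ (rpow_pos_of_pos hh s).ne', mul_div_assoc]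

theorem psiStar_tail_limit_general
    (m : ℕ) (f : ℝ → ℝ)
    (hf_meas : Measurable f)
    (hf_prob : ∫ w in Set.Ioi (0 : ℝ), f w = 1)
    (hf_mom : IntegrableOn (fun w => w ^ (m + 2) * f w) (Set.Ioi 0))
    (b C : ℝ) (hb : 0 < b) (hC : 0 < C)
    (hlim : Tendsto (fun w : ℝ => w ^ (-(b - 1)) * f w)
      (nhdsWithin 0 (Set.Ioi 0)) (nhds C)) :
    ∀ r : ℕ, r ≤ m →
      Tendsto (fun h : ℝ => h * psiStar f r h) atTop (nhds ((r : ℝ) + b)) := by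
  intro r hr
  have hf_int : IntegrableOn f (Ioi 0) := by
    by_contra hf
    simp [integral_undef hf] at hf_prob
  have hμ (k : ℕ) (hk : k ≤ m + 2) :=
    tendsto_rpow_mul_tiltedMoment hf_meas (integrableOn_pow_mul_of_le hf_int hf_mom hk) hb hlim
  have hμ' := hμ (r + 1) (by omega)
  rw [Nat.cast_succ, add_right_comm] at hμ'
  exact tendsto_mul_psiStar (by positivity) hC.ne' (hμ r (by omega)) hμ'

/-- if `w^{-(b-1)} f(w) → C` as `w → 0+` for some `b > 0` and
`C > 0`, then for every `0 ≤ r ≤ m`, `h · ψ*(r,h) → r + b` as `h → ∞`. -/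
theorem psiStar_tail_limit
    (m : ℕ) (hm : 1 ≤ m) (f : ℝ → ℝ)
    (hf_meas : Measurable f)
    (hf_nonneg : ∀ w, 0 ≤ f w)
    (hf_supp : ∀ w, w ≤ 0 → f w = 0)
    (hf_prob : ∫ w in Set.Ioi (0 : ℝ), f w = 1)
    (hf_mom : IntegrableOn (fun w => w ^ (m + 2) * f w) (Set.Ioi 0))
    (b C : ℝ) (hb : 0 < b) (hC : 0 < C)
    (hlim : Tendsto (fun w : ℝ => w ^ (-(b - 1)) * f w)
      (nhdsWithin 0 (Set.Ioi 0)) (nhds C)) :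
    ∀ r : ℕ, r ≤ m →
      Tendsto (fun h : ℝ => h * psiStar f r h) atTop (nhds ((r : ℝ) + b)) :=
  psiStar_tail_limit_general m f hf_meas hf_prob hf_mom b C hb hC hlim
end

section
/- (Lemma 1, part 3.) Suppose in addition there exist constants b > 0 and C > 0 such that lim_{w→0+} w^{−(b−1)} f(w) = C. Then there exist constants B > 0 and h̄ > 0 such that for all h ≥ h̄ and all integers r with 0 ≤ r ≤ m, ψ*(r,h) ≥ B · h^{−1}; in particular min_{0 ≤ r ≤ m} ψ*(r,h) ≥ B h^{−1} for all h ≥ h̄. -/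
/-!
Near `0` the density is comparable to `w ^ (b - 1)`, so for large `h` the tilted moment `μ_r(h)`
is comparable to `h ^ (-(r + b))`. From below, integrate over `(0, 1/h)`, where
`e^{-hw} ≥ e^{-1}`; from above, the part near `0` is at most a Gamma integral and the rest is
`O(e^{-δh})`, which is negligible. Hence `ψ*(r,h) = μ_{r+1}(h) / μ_r(h) ≳ h⁻¹`, and
finitely many `r` share a constant.
-/

open MeasureTheory Set Filter

/-- `ψ*_min(h) = min_{0 ≤ r ≤ m} ψ*(r,h)`. -/
noncomputable def psiStarMin (f : ℝ → ℝ) (m : ℕ) (h : ℝ) : ℝ :=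
  (Finset.range (m + 1)).inf' (Finset.nonempty_range_iff.mpr (Nat.succ_ne_zero m))
    (fun r => psiStar f r h)

open Real

section TiltedMoment

variable {f : ℝ → ℝ} {a b h : ℝ}

lemma pow_le_one_add_pow {w : ℝ} (hw : 0 ≤ w) {r n : ℕ} (hrn : r ≤ n) :
    w ^ r ≤ 1 + w ^ n := by
  rcases le_total w 1 with hw1 | hw1
  · linarith [pow_le_one₀ hw hw1 (n := r), pow_nonneg hw n]
  · linarith [pow_le_pow_right₀ hw1 hrn]

lemma pow_mul_rpow_sub_one {w : ℝ} (hw : 0 < w) (r : ℕ) (b : ℝ) :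
    w ^ r * w ^ (b - 1) = w ^ ((r : ℝ) + b - 1) := by
  rw [← rpow_natCast, ← rpow_add hw, add_sub_assoc]

lemma MeasureTheory.IntegrableOn.pow_mul_of_le {n r : ℕ} (hf : IntegrableOn f (Ioi 0))
    (hfn : IntegrableOn (fun w => w ^ n * f w) (Ioi 0)) (hrn : r ≤ n) :
    IntegrableOn (fun w => w ^ r * f w) (Ioi 0) := by
  refine (hf.norm.add hfn.norm).mono' ((continuous_pow r).aestronglyMeasurable.mul
    hf.aestronglyMeasurable) ?_
  filter_upwards [ae_restrict_mem measurableSet_Ioi] with w (hw : 0 < w)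
  simp only [Pi.add_apply, norm_mul, norm_pow, Real.norm_of_nonneg hw.le]
  nlinarith [pow_le_one_add_pow hw.le hrn, norm_nonneg (f w)]

lemma MeasureTheory.IntegrableOn.pow_mul_exp_mul {r : ℕ}
    (hfr : IntegrableOn (fun w => w ^ r * f w) (Ioi 0)) (hh : 0 ≤ h) :
    IntegrableOn (fun w => w ^ r * exp (-h * w) * f w) (Ioi 0) := by
  refine (hfr.bdd_mul (f := fun w => exp (-h * w)) (c := 1) (by fun_prop) ?_).congr
    (ae_of_all _ fun w => by ring)
  filter_upwards [ae_restrict_mem measurableSet_Ioi] with w (hw : 0 < w)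
  rw [norm_of_nonneg (exp_pos _).le, exp_le_one_iff]
  nlinarith

lemma eventually_mul_rpow_lt_and_lt_mul_rpow {C A : ℝ}
    (hlim : Tendsto (fun w : ℝ => w ^ (-(b - 1)) * f w) (nhdsWithin 0 (Ioi 0)) (nhds C))
    (ha : a < C) (hA : C < A) :
    ∀ᶠ w in nhdsWithin 0 (Ioi 0), a * w ^ (b - 1) < f w ∧ f w < A * w ^ (b - 1) := by
  filter_upwards [hlim.eventually (Ioo_mem_nhds ha hA), self_mem_nhdsWithin]
    with w ⟨hlo, hhi⟩ (hw : 0 < w)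
  have hwb := rpow_pos_of_pos hw (b - 1)
  have hfw : f w = w ^ (b - 1) * (w ^ (-(b - 1)) * f w) := by
    rw [← mul_assoc, ← rpow_add hw, add_neg_cancel, rpow_zero, one_mul]
  rw [hfw, mul_comm a, mul_comm A]
  exact ⟨mul_lt_mul_of_pos_left hlo hwb, mul_lt_mul_of_pos_left hhi hwb⟩

lemma tiltedMoment_le {A δ : ℝ} (r : ℕ) (hb : 0 < b) (hh : 0 < h) (hA : 0 ≤ A)
    (hf_nonneg : ∀ w, 0 < w → 0 ≤ f w) (hfr : IntegrableOn (fun w => w ^ r * f w) (Ioi 0))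
    (hfδ : ∀ w ∈ Ioo 0 δ, f w ≤ A * w ^ (b - 1)) :
    tiltedMoment f r h ≤ A * Gamma (r + b) * h⁻¹ ^ ((r : ℝ) + b) +
      exp (-δ * h) * ∫ w in Ioi 0, w ^ r * f w := by
  have hrb : 0 < (r : ℝ) + b := by positivity
  have hgamma : IntegrableOn (fun w : ℝ => w ^ ((r : ℝ) + b - 1) * exp (-(h * w))) (Ioi 0) := by
    simpa [rpow_one, neg_mul] using
      integrableOn_rpow_mul_exp_neg_mul_rpow (p := 1) (by linarith) one_pos hh
  -- Near `0` the first summand dominates the integrand, away from `0` the second one does.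
  have hpointwise : ∀ w ∈ Ioi (0 : ℝ), w ^ r * exp (-h * w) * f w ≤
      A * (w ^ ((r : ℝ) + b - 1) * exp (-(h * w))) + exp (-δ * h) * (w ^ r * f w) := by
    intro w (hw : 0 < w)
    have hfw := hf_nonneg w hw
    rcases lt_or_ge w δ with hwδ | hδw
    · have hfA := hfδ w ⟨hw, hwδ⟩
      rw [← pow_mul_rpow_sub_one hw]
      have htail : 0 ≤ exp (-δ * h) * (w ^ r * f w) := by positivity
      calc w ^ r * exp (-h * w) * f w ≤ w ^ r * exp (-h * w) * (A * w ^ (b - 1)) := by gcongr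
        _ ≤ _ := by rw [neg_mul]; linarith
    · have hexp : exp (-h * w) ≤ exp (-δ * h) := exp_le_exp.mpr (by nlinarith)
      have hhead : 0 ≤ A * (w ^ ((r : ℝ) + b - 1) * exp (-(h * w))) := by positivity
      calc w ^ r * exp (-h * w) * f w ≤ exp (-δ * h) * (w ^ r * f w) := by
            rw [mul_right_comm, mul_comm]; gcongr
        _ ≤ _ := by linarith
  calc tiltedMoment f r h
      ≤ ∫ w in Ioi 0,
          A * (w ^ ((r : ℝ) + b - 1) * exp (-(h * w))) + exp (-δ * h) * (w ^ r * f w) :=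
        setIntegral_mono_on (hfr.pow_mul_exp_mul hh.le)
          ((hgamma.const_mul A).add (hfr.const_mul _)) measurableSet_Ioi hpointwise
    _ = _ := by
        rw [integral_add (hgamma.const_mul A) (hfr.const_mul _), integral_const_mul,
          integral_const_mul, integral_rpow_mul_exp_neg_mul_Ioi hrb hh, one_div]
        ring

lemma le_tiltedMoment (s : ℕ) (hb : 0 < b) (hh : 0 < h) (ha : 0 ≤ a)
    (hf_nonneg : ∀ w, 0 < w → 0 ≤ f w) (hfs : IntegrableOn (fun w => w ^ s * f w) (Ioi 0))
    (hfh : ∀ w ∈ Ioo 0 h⁻¹, a * w ^ (b - 1) ≤ f w) :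
    a * exp (-1) / (s + b) * h⁻¹ ^ ((s : ℝ) + b) ≤ tiltedMoment f s h := by
  have hsb : -1 < (s : ℝ) + b - 1 := by linarith [s.cast_nonneg (α := ℝ)]
  have htilt := hfs.pow_mul_exp_mul hh.le
  have hpointwise : ∀ w ∈ Ioo 0 h⁻¹,
      a * exp (-1) * w ^ ((s : ℝ) + b - 1) ≤ w ^ s * exp (-h * w) * f w := by
    rintro w ⟨hw, hwh⟩
    have hexp : exp (-1) ≤ exp (-h * w) := by
      rw [exp_le_exp, neg_mul, neg_le_neg_iff]
      calc h * w ≤ h * h⁻¹ := by gcongr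
        _ = 1 := mul_inv_cancel₀ hh.ne'
    have hfa := hfh w ⟨hw, hwh⟩
    rw [← pow_mul_rpow_sub_one hw]
    calc a * exp (-1) * (w ^ s * w ^ (b - 1)) = w ^ s * exp (-1) * (a * w ^ (b - 1)) := by ring
      _ ≤ w ^ s * exp (-h * w) * f w := by gcongr
  calc a * exp (-1) / (s + b) * h⁻¹ ^ ((s : ℝ) + b)
      = ∫ w in Ioo 0 h⁻¹, a * exp (-1) * w ^ ((s : ℝ) + b - 1) := by
        rw [integral_const_mul, ← integral_Ioc_eq_integral_Ioo,
          ← intervalIntegral.integral_of_le (inv_pos.mpr hh).le, integral_rpow (Or.inl hsb),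
          sub_add_cancel, zero_rpow (by linarith)]
        ring
    _ ≤ ∫ w in Ioo 0 h⁻¹, w ^ s * exp (-h * w) * f w :=
        setIntegral_mono_on (((intervalIntegral.intervalIntegrable_rpow' hsb).1.mono_set
          Ioo_subset_Ioc_self).const_mul _) (htilt.mono_set Ioo_subset_Ioi_self)
          measurableSet_Ioo hpointwise
    _ ≤ tiltedMoment f s h := by
        refine setIntegral_mono_set htilt ?_ Ioo_subset_Ioi_self.eventuallyLE
        filter_upwards [ae_restrict_mem measurableSet_Ioi] with w (hw : 0 < w)
        have := hf_nonneg w hw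
        positivity

lemma exists_pos_eventually_tiltedMoment_le {A : ℝ} (r : ℕ) (hb : 0 < b) (hA : 0 < A)
    (hf_nonneg : ∀ w, 0 < w → 0 ≤ f w) (hfr : IntegrableOn (fun w => w ^ r * f w) (Ioi 0))
    (hnear : ∀ᶠ w in nhdsWithin 0 (Ioi 0), f w ≤ A * w ^ (b - 1)) :
    ∃ K > 0, ∀ᶠ h in atTop, tiltedMoment f r h ≤ K * h⁻¹ ^ ((r : ℝ) + b) := by
  obtain ⟨δ, hδ, hfδ⟩ := mem_nhdsGT_iff_exists_Ioo_subset.mp hnear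
  set M := ∫ w in Ioi 0, w ^ r * f w
  have hM : 0 ≤ M := setIntegral_nonneg measurableSet_Ioi fun w (hw : 0 < w) =>
    mul_nonneg (pow_nonneg hw.le r) (hf_nonneg w hw)
  have hgamma : 0 < Gamma (r + b) := Gamma_pos_of_pos (by positivity)
  refine ⟨A * Gamma (r + b) + M, by positivity, ?_⟩
  filter_upwards [eventually_gt_atTop 0, (tendsto_rpow_mul_exp_neg_mul_atTop_nhds_zero
    ((r : ℝ) + b) δ hδ).eventually_le_const zero_lt_one] with h hh hdecay
  have hexp : exp (-δ * h) ≤ h⁻¹ ^ ((r : ℝ) + b) := by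
    rw [inv_rpow hh.le, ← one_div, le_div_iff₀ (by positivity), mul_comm]
    exact hdecay
  calc tiltedMoment f r h
      ≤ A * Gamma (r + b) * h⁻¹ ^ ((r : ℝ) + b) + exp (-δ * h) * M :=
        tiltedMoment_le r hb hh hA.le hf_nonneg hfr hfδ
    _ ≤ (A * Gamma (r + b) + M) * h⁻¹ ^ ((r : ℝ) + b) := by
        rw [add_mul, mul_comm M]
        exact add_le_add le_rfl (mul_le_mul_of_nonneg_right hexp hM)

lemma exists_pos_eventually_le_tiltedMoment (s : ℕ) (hb : 0 < b) (ha : 0 < a)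
    (hf_nonneg : ∀ w, 0 < w → 0 ≤ f w) (hfs : IntegrableOn (fun w => w ^ s * f w) (Ioi 0))
    (hnear : ∀ᶠ w in nhdsWithin 0 (Ioi 0), a * w ^ (b - 1) ≤ f w) :
    ∃ c > 0, ∀ᶠ h in atTop, c * h⁻¹ ^ ((s : ℝ) + b) ≤ tiltedMoment f s h := by
  obtain ⟨δ, hδ, hfδ⟩ := mem_nhdsGT_iff_exists_Ioo_subset.mp hnear
  refine ⟨a * exp (-1) / (s + b), by positivity, ?_⟩
  filter_upwards [eventually_gt_atTop δ⁻¹] with h hh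
  have hh0 : 0 < h := (inv_pos.mpr hδ).trans hh
  exact le_tiltedMoment s hb hh0 ha.le hf_nonneg hfs fun w hw =>
    hfδ ⟨hw.1, hw.2.trans ((inv_lt_comm₀ hδ hh0).mp hh)⟩

lemma exists_pos_eventually_mul_inv_le_psiStar {C : ℝ} (r : ℕ) (hb : 0 < b) (hC : 0 < C)
    (hlim : Tendsto (fun w : ℝ => w ^ (-(b - 1)) * f w) (nhdsWithin 0 (Ioi 0)) (nhds C))
    (hf_nonneg : ∀ w, 0 < w → 0 ≤ f w) (hfr : IntegrableOn (fun w => w ^ r * f w) (Ioi 0))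
    (hfr' : IntegrableOn (fun w => w ^ (r + 1) * f w) (Ioi 0)) :
    ∃ B > 0, ∀ᶠ h in atTop, B * h⁻¹ ≤ psiStar f r h := by
  have hnear := eventually_mul_rpow_lt_and_lt_mul_rpow hlim (half_lt_self hC)
    (lt_two_mul_self hC)
  obtain ⟨c, hc, hlower⟩ := exists_pos_eventually_le_tiltedMoment (r + 1) hb (half_pos hC)
    hf_nonneg hfr' (hnear.mono fun _ hw => hw.1.le)
  obtain ⟨c', hc', hlower'⟩ := exists_pos_eventually_le_tiltedMoment r hb (half_pos hC)
    hf_nonneg hfr (hnear.mono fun _ hw => hw.1.le)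
  obtain ⟨K, hK, hupper⟩ := exists_pos_eventually_tiltedMoment_le r hb (by positivity)
    hf_nonneg hfr (hnear.mono fun _ hw => hw.2.le)
  refine ⟨c / K, div_pos hc hK, ?_⟩
  filter_upwards [eventually_gt_atTop 0, hlower, hlower', hupper] with h hh hlo hlo' hup
  have hpow : 0 < h⁻¹ ^ ((r : ℝ) + b) := by positivity
  calc c / K * h⁻¹ = c * h⁻¹ ^ ((↑(r + 1) : ℝ) + b) / (K * h⁻¹ ^ ((r : ℝ) + b)) := by
        rw [Nat.cast_succ, add_right_comm, rpow_add_one (by positivity)]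
        field_simp
    _ ≤ psiStar f r h :=
        div_le_div₀ ((mul_pos hc (by positivity)).le.trans hlo) hlo
          ((mul_pos hc' hpow).trans_le hlo') hup

end TiltedMoment

lemma exists_pos_eventually_forall_mul_inv_le {ι : Type*} (s : Finset ι) (g : ι → ℝ → ℝ)
    (hg : ∀ i ∈ s, ∃ B > 0, ∀ᶠ h in atTop, B * h⁻¹ ≤ g i h) :
    ∃ B > 0, ∀ᶠ h in atTop, ∀ i ∈ s, B * h⁻¹ ≤ g i h := by
  classical
  induction s using Finset.induction_on with
  | empty => exact ⟨1, one_pos, by simp⟩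
  | insert i s _ ih =>
    obtain ⟨B₁, hB₁, hi⟩ := hg i (Finset.mem_insert_self i s)
    obtain ⟨B₂, hB₂, hs⟩ := ih fun j hj => hg j (Finset.mem_insert_of_mem hj)
    refine ⟨min B₁ B₂, lt_min hB₁ hB₂, ?_⟩
    filter_upwards [eventually_ge_atTop 0, hi, hs] with h hh hih hsh
    have hh' : 0 ≤ h⁻¹ := inv_nonneg.mpr hh
    intro j hj
    rcases Finset.mem_insert.mp hj with rfl | hj
    · exact (mul_le_mul_of_nonneg_right (min_le_left _ _) hh').trans hih
    · exact (mul_le_mul_of_nonneg_right (min_le_right _ _) hh').trans (hsh j hj)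

theorem psiStar_lower_bound_general
    (m : ℕ) (f : ℝ → ℝ)
    (hf_nonneg : ∀ w, 0 ≤ f w)
    (hf_prob : ∫ w in Set.Ioi (0 : ℝ), f w = 1)
    (hf_mom : IntegrableOn (fun w => w ^ (m + 2) * f w) (Set.Ioi 0))
    (b C : ℝ) (hb : 0 < b) (hC : 0 < C)
    (hlim : Tendsto (fun w : ℝ => w ^ (-(b - 1)) * f w)
      (nhdsWithin 0 (Set.Ioi 0)) (nhds C)) :
    ∃ B > (0 : ℝ), ∃ hbar > (0 : ℝ),
      (∀ h : ℝ, hbar ≤ h → ∀ r : ℕ, r ≤ m → B * h⁻¹ ≤ psiStar f r h) ∧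
      (∀ h : ℝ, hbar ≤ h → B * h⁻¹ ≤ psiStarMin f m h) := by
  have hf_int : IntegrableOn f (Ioi 0) := Integrable.of_integral_ne_zero (by simp [hf_prob])
  have hmom (r : ℕ) (hr : r ≤ m + 2) : IntegrableOn (fun w => w ^ r * f w) (Ioi 0) :=
    hf_int.pow_mul_of_le hf_mom hr
  obtain ⟨B, hB, hev⟩ := exists_pos_eventually_forall_mul_inv_le (Finset.range (m + 1))
    (psiStar f) fun r hr => by
      have hrm : r ≤ m := Finset.mem_range_succ_iff.mp hr
      exact exists_pos_eventually_mul_inv_le_psiStar r hb hC hlim (fun w _ => hf_nonneg w)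
        (hmom r (by omega)) (hmom (r + 1) (by omega))
  obtain ⟨h₀, hh₀⟩ := eventually_atTop.mp hev
  refine ⟨B, hB, max h₀ 1, by positivity, fun h hh r hr => ?_, fun h hh => ?_⟩
  · exact hh₀ h (le_of_max_le_left hh) r (Finset.mem_range_succ_iff.mpr hr)
  · exact Finset.le_inf' _ _ (hh₀ h (le_of_max_le_left hh))

/-- Lemma 1, part 3: if `w^{-(b-1)} f(w) → C` as `w → 0+` for
some `b > 0` and `C > 0`, then there exist `B > 0` and `h̄ > 0` such that for
all `h ≥ h̄` and all `0 ≤ r ≤ m`, `ψ*(r,h) ≥ B·h⁻¹`; in particular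
`min_{0 ≤ r ≤ m} ψ*(r,h) ≥ B·h⁻¹` for all `h ≥ h̄`. -/
theorem psiStar_lower_bound
    (m : ℕ) (hm : 1 ≤ m) (f : ℝ → ℝ)
    (hf_meas : Measurable f)
    (hf_nonneg : ∀ w, 0 ≤ f w)
    (hf_supp : ∀ w, w ≤ 0 → f w = 0)
    (hf_prob : ∫ w in Set.Ioi (0 : ℝ), f w = 1)
    (hf_mom : IntegrableOn (fun w => w ^ (m + 2) * f w) (Set.Ioi 0))
    (b C : ℝ) (hb : 0 < b) (hC : 0 < C)
    (hlim : Tendsto (fun w : ℝ => w ^ (-(b - 1)) * f w)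
      (nhdsWithin 0 (Set.Ioi 0)) (nhds C)) :
    ∃ B > (0 : ℝ), ∃ hbar > (0 : ℝ),
      (∀ h : ℝ, hbar ≤ h → ∀ r : ℕ, r ≤ m → B * h⁻¹ ≤ psiStar f r h) ∧
      (∀ h : ℝ, hbar ≤ h → B * h⁻¹ ≤ psiStarMin f m h) :=
  psiStar_lower_bound_general m f hf_nonneg hf_prob hf_mom b C hb hC hlim
end

section
/- (Hartman-type stability in the initial segment.) Let τ > 0, let λ : [0,τ] → [0,∞) be integrable, let K ≥ 0, and let q : [0,τ] × B([0,τ],ℝ) → ℝ satisfy |q(s,Λ₁) − q(s,Λ₂)| ≤ K · sup_{u ∈ [0,s]} |Λ₁(u) − Λ₂(u)| for all s ∈ [0,τ] and all bounded Λ₁, Λ₂. Let ε ∈ [0,τ], and suppose Λ₁, Λ₂ are bounded measurable functions on [0,τ] such that for i = 1, 2 the map s ↦ q(s,Λ_i)λ(s) is integrable on [ε,τ] and Λ_i(t) = Λ_i(ε) + ∫_ε^t q(s,Λ_i) λ(s) ds for all t ∈ [ε,τ]. Then sup_{t ∈ [ε,τ]} |Λ₁(t) − Λ₂(t)| ≤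 (sup_{u ∈ [0,ε]} |Λ₁(u) − Λ₂(u)|) · exp(K ∫_ε^τ λ(s) ds). -/
open MeasureTheory Set Real

/-!
Let `Δ = |Λ₁ - Λ₂|`, `S x = sup_{[0,x]} Δ` and `F x = K ∫_ε^x λ`. Subtracting the two Volterra
equations and using the Lipschitz property of `q` gives, for `ε ≤ x ≤ y ≤ τ`,
`S y ≤ S x + (F y - F x) S y`. On a subinterval where the increment `d` of `F` satisfies
`(1 + η) d ≤ η` this yields `S y ≤ S x / (1 - d) ≤ S x · exp((1 + η) d)`; chaining over a fine
partition of `[ε, τ]` and letting `η → 0` gives `S τ ≤ S ε · exp(F τ)`.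
-/

theorem le_mul_exp_of_le_add_mul {a b x η : ℝ} (ha : 0 ≤ a) (hb : 0 ≤ b) (hx : 0 ≤ x)
    (hη : 0 ≤ η) (hstep : b ≤ a + x * b) (hxη : x * (1 + η) ≤ η) :
    b ≤ a * exp (x * (1 + η)) := by
  -- `(1 - x) (1 + x (1 + η)) = 1 + x (η - x (1 + η)) ≥ 1`
  have hinv : b ≤ b * (1 - x) * (1 + x * (1 + η)) := by nlinarith [mul_nonneg hb hx]
  calc b ≤ b * (1 - x) * (1 + x * (1 + η)) := hinv
    _ ≤ a * (1 + x * (1 + η)) := mul_le_mul_of_nonneg_right (by linarith) (by positivity)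
    _ ≤ a * exp (x * (1 + η)) :=
      mul_le_mul_of_nonneg_left (by linarith [add_one_le_exp (x * (1 + η))]) ha

theorem le_mul_exp_sub_of_forall_sub_le {S G : ℝ → ℝ} {s : Set ℝ} [hs : s.OrdConnected]
    {δ : ℝ} (hδ : 0 < δ)
    (hlocal : ∀ x ∈ s, ∀ y ∈ s, x ≤ y → y - x ≤ δ → S y ≤ S x * exp (G y - G x))
    {x y : ℝ} (hx : x ∈ s) (hy : y ∈ s) (hxy : x ≤ y) :
    S y ≤ S x * exp (G y - G x) := by
  suffices chain : ∀ n : ℕ, ∀ y ∈ s, x ≤ y → y - x ≤ n * δ → S y ≤ S x * exp (G y - G x) by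
    obtain ⟨n, hn⟩ := exists_nat_ge ((y - x) / δ)
    exact chain n y hy hxy ((div_le_iff₀ hδ).mp hn)
  intro n
  induction n with
  | zero =>
    intro y _ hxy hyx
    obtain rfl : y = x := by push_cast at hyx; linarith
    simp
  | succ n ih =>
    intro y hy hxy hyx
    set m := max x (y - δ)
    have hmy : m ≤ y := max_le hxy (by linarith)
    have hm : m ∈ s := hs.out hx hy ⟨le_max_left _ _, hmy⟩
    have hmx : m - x ≤ n * δ := sub_le_iff_le_add'.mpr
      (max_le (le_add_of_nonneg_right (by positivity)) (by push_cast at hyx; linarith))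
    calc S y ≤ S m * exp (G y - G m) :=
          hlocal m hm y hy hmy (by linarith [le_max_right x (y - δ)])
      _ ≤ S x * exp (G m - G x) * exp (G y - G m) :=
          mul_le_mul_of_nonneg_right (ih m hm (le_max_left _ _) hmx) (exp_pos _).le
      _ = S x * exp (G y - G x) := by rw [mul_assoc, ← exp_add]; ring_nf

theorem le_mul_exp_sub_of_le_add_sub_mul {S F : ℝ → ℝ} {a b : ℝ} (hab : a ≤ b)
    (hF : ContinuousOn F (Icc a b)) (hFmono : MonotoneOn F (Icc a b))
    (hS : ∀ x ∈ Icc a b, 0 ≤ S x)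
    (hstep : ∀ x ∈ Icc a b, ∀ y ∈ Icc a b, x ≤ y → S y ≤ S x + (F y - F x) * S y) :
    S b ≤ S a * exp (F b - F a) := by
  have hslack : ∀ η ∈ Ioc (0 : ℝ) 1, S b ≤ S a * exp ((1 + η) * (F b - F a)) := by
    rintro η ⟨hη0, hη1⟩
    obtain ⟨δ, hδ, hFδ⟩ := Metric.uniformContinuousOn_iff.mp
      (isCompact_Icc.uniformContinuousOn_of_continuous hF) (η / 2) (by positivity)
    have hlocal : ∀ x ∈ Icc a b, ∀ y ∈ Icc a b, x ≤ y → y - x ≤ δ / 2 →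
        S y ≤ S x * exp ((1 + η) * F y - (1 + η) * F x) := by
      intro x hx y hy hxy hyx
      have hd0 : 0 ≤ F y - F x := sub_nonneg.mpr (hFmono hx hy hxy)
      have hdη : F y - F x < η / 2 := by
        have := hFδ y hy x hx (by rw [Real.dist_eq, abs_of_nonneg (by linarith)]; linarith)
        rwa [Real.dist_eq, abs_of_nonneg hd0] at this
      have := le_mul_exp_of_le_add_mul (hS x hx) (hS y hy) hd0 hη0.le (hstep x hx y hy hxy)
        (by nlinarith)
      convert this using 3; ring
    have := le_mul_exp_sub_of_forall_sub_le (half_pos hδ) hlocal (left_mem_Icc.mpr hab)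
      (right_mem_Icc.mpr hab) hab
    rwa [← mul_sub] at this
  have hcont : ContinuousWithinAt (fun η : ℝ => S a * exp ((1 + η) * (F b - F a))) (Ioi 0) 0 :=
    Continuous.continuousWithinAt (by fun_prop)
  simpa using ge_of_tendsto hcont (Filter.eventually_of_mem (Ioc_mem_nhdsGT one_pos) hslack)

section RunningSup

variable {Δ : ℝ → ℝ} {τ : ℝ}

theorem le_sSup_image_Icc (hbdd : BddAbove (Δ '' Icc 0 τ)) {u x : ℝ} (hu : u ∈ Icc 0 x)
    (hx : x ≤ τ) : Δ u ≤ sSup (Δ '' Icc 0 x) :=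
  le_csSup (hbdd.mono (image_mono (Icc_subset_Icc_right hx))) (mem_image_of_mem _ hu)

theorem sSup_image_Icc_mono (hbdd : BddAbove (Δ '' Icc 0 τ)) {x y : ℝ} (hx : 0 ≤ x)
    (hxy : x ≤ y) (hy : y ≤ τ) : sSup (Δ '' Icc 0 x) ≤ sSup (Δ '' Icc 0 y) :=
  csSup_le_csSup (hbdd.mono (image_mono (Icc_subset_Icc_right hy)))
    ((nonempty_Icc.mpr hx).image _) (image_mono (Icc_subset_Icc_right hxy))

theorem sSup_image_Icc_nonneg (hΔ : ∀ u, 0 ≤ Δ u) (hbdd : BddAbove (Δ '' Icc 0 τ)) {x : ℝ}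
    (hx : 0 ≤ x) (hxτ : x ≤ τ) : 0 ≤ sSup (Δ '' Icc 0 x) :=
  (hΔ 0).trans (le_sSup_image_Icc hbdd (left_mem_Icc.mpr hx) hxτ)

theorem sSup_image_Icc_le_add_sub_mul {F : ℝ → ℝ} {ε : ℝ} (hε : 0 ≤ ε) (hΔ : ∀ u, 0 ≤ Δ u)
    (hbdd : BddAbove (Δ '' Icc 0 τ)) (hFmono : MonotoneOn F (Icc ε τ))
    (hincr : ∀ x u b, ε ≤ x → x ≤ u → u ≤ b → b ≤ τ →
      Δ u ≤ Δ x + (F u - F x) * sSup (Δ '' Icc 0 b))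
    {x b : ℝ} (hx : ε ≤ x) (hxb : x ≤ b) (hb : b ≤ τ) :
    sSup (Δ '' Icc 0 b) ≤ sSup (Δ '' Icc 0 x) + (F b - F x) * sSup (Δ '' Icc 0 b) := by
  have hx0 : 0 ≤ x := hε.trans hx
  have hSb : 0 ≤ sSup (Δ '' Icc 0 b) := sSup_image_Icc_nonneg hΔ hbdd (hx0.trans hxb) hb
  have hmem : ∀ {v}, ε ≤ v → v ≤ b → v ∈ Icc ε τ := fun h1 h2 => ⟨h1, h2.trans hb⟩
  refine csSup_le ((nonempty_Icc.mpr (hx0.trans hxb)).image _) ?_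
  rintro _ ⟨u, hu, rfl⟩
  rcases le_or_gt u x with hux | hxu
  · have : 0 ≤ (F b - F x) * sSup (Δ '' Icc 0 b) :=
      mul_nonneg (sub_nonneg.mpr (hFmono (hmem hx hxb) (hmem (hx.trans hxb) le_rfl) hxb)) hSb
    linarith [le_sSup_image_Icc hbdd ⟨hu.1, hux⟩ (hxb.trans hb)]
  · have hFub : F u ≤ F b :=
      hFmono (hmem (hx.trans hxu.le) hu.2) (hmem (hx.trans hxb) le_rfl) hu.2
    have := mul_le_mul_of_nonneg_right (sub_le_sub_right hFub (F x)) hSb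
    linarith [hincr x u b hx hxu.le hu.2 hb, le_sSup_image_Icc hbdd ⟨hx0, le_rfl⟩ (hxb.trans hb)]

end RunningSup

theorem abs_sub_le_abs_sub_add_integral {f g φ ψ w : ℝ → ℝ} {x u : ℝ} (hxu : x ≤ u)
    (hφ : IntervalIntegrable φ volume x u) (hψ : IntervalIntegrable ψ volume x u)
    (hw : IntervalIntegrable w volume x u)
    (hf : f u - f x = ∫ s in x..u, φ s) (hg : g u - g x = ∫ s in x..u, ψ s)
    (hbound : ∀ s ∈ Icc x u, |φ s - ψ s| ≤ w s) :
    |f u - g u| ≤ |f x - g x| + ∫ s in x..u, w s := by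
  have hsplit : f u - g u = (f x - g x) + ∫ s in x..u, (φ s - ψ s) := by
    rw [intervalIntegral.integral_sub hφ hψ]; linarith
  have hint : |∫ s in x..u, (φ s - ψ s)| ≤ ∫ s in x..u, w s := by
    simpa only [Real.norm_eq_abs] using
      intervalIntegral.norm_integral_le_of_norm_le (f := fun s => φ s - ψ s) hxu
        (ae_of_all _ fun s hs => hbound s (Ioc_subset_Icc_self hs)) hw
  rw [hsplit]
  exact (abs_add_le _ _).trans (add_le_add le_rfl hint)

theorem MeasureTheory.IntegrableOn.intervalIntegrable_of_Icc_subset {φ : ℝ → ℝ} {a b x u : ℝ}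
    (h : IntegrableOn φ (Icc a b)) (hx : a ≤ x) (hxu : x ≤ u) (hu : u ≤ b) :
    IntervalIntegrable φ volume x u :=
  (intervalIntegrable_iff_integrableOn_Icc_of_le hxu).mpr (h.mono_set (Icc_subset_Icc hx hu))

theorem sub_eq_integral_of_eq_add_integral {Λ φ : ℝ → ℝ} {ε τ : ℝ}
    (hint : IntegrableOn φ (Icc ε τ)) (heq : ∀ t ∈ Icc ε τ, Λ t = Λ ε + ∫ s in ε..t, φ s)
    {x u : ℝ} (hx : ε ≤ x) (hxu : x ≤ u) (hu : u ≤ τ) :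
    Λ u - Λ x = ∫ s in x..u, φ s := by
  rw [heq u ⟨hx.trans hxu, hu⟩, heq x ⟨hx, hxu.trans hu⟩, add_sub_add_left_eq_sub,
    intervalIntegral.integral_interval_sub_left
      (hint.intervalIntegrable_of_Icc_subset le_rfl (hx.trans hxu) hu)
      (hint.intervalIntegrable_of_Icc_subset le_rfl hx (hxu.trans hu))]

theorem bddAbove_image_abs_sub {f g : ℝ → ℝ} {s : Set ℝ} (hf : ∃ M, ∀ u ∈ s, |f u| ≤ M)
    (hg : ∃ M, ∀ u ∈ s, |g u| ≤ M) : BddAbove ((fun u => |f u - g u|) '' s) := by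
  obtain ⟨M, hM⟩ := hf
  obtain ⟨N, hN⟩ := hg
  refine ⟨M + N, ?_⟩
  rintro _ ⟨u, hu, rfl⟩
  exact (abs_sub _ _).trans (add_le_add (hM u hu) (hN u hu))

section Volterra

variable {τ ε K : ℝ} {lam : ℝ → ℝ} {q : ℝ → (ℝ → ℝ) → ℝ} {Λ₁ Λ₂ : ℝ → ℝ}

theorem abs_sub_le_of_volterra (hlam_nonneg : ∀ s, 0 ≤ lam s)
    (hlam_int : IntegrableOn lam (Icc ε τ)) (hK : 0 ≤ K) (hε : 0 ≤ ε)
    (hbdd : BddAbove ((fun u => |Λ₁ u - Λ₂ u|) '' Icc 0 τ))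
    (hq : ∀ s ∈ Icc 0 τ, |q s Λ₁ - q s Λ₂| ≤ K * sSup ((fun u => |Λ₁ u - Λ₂ u|) '' Icc 0 s))
    (hint₁ : IntegrableOn (fun s => q s Λ₁ * lam s) (Icc ε τ))
    (hint₂ : IntegrableOn (fun s => q s Λ₂ * lam s) (Icc ε τ))
    (heq₁ : ∀ t ∈ Icc ε τ, Λ₁ t = Λ₁ ε + ∫ s in ε..t, q s Λ₁ * lam s)
    (heq₂ : ∀ t ∈ Icc ε τ, Λ₂ t = Λ₂ ε + ∫ s in ε..t, q s Λ₂ * lam s)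
    {x u b : ℝ} (hx : ε ≤ x) (hxu : x ≤ u) (hub : u ≤ b) (hb : b ≤ τ) :
    |Λ₁ u - Λ₂ u| ≤ |Λ₁ x - Λ₂ x| +
      ((K * ∫ s in ε..u, lam s) - K * ∫ s in ε..x, lam s) *
        sSup ((fun u => |Λ₁ u - Λ₂ u|) '' Icc 0 b) := by
  set S := sSup ((fun u => |Λ₁ u - Λ₂ u|) '' Icc 0 b)
  have hu : u ≤ τ := hub.trans hb
  have hlam_xu := hlam_int.intervalIntegrable_of_Icc_subset hx hxu hu
  have hbound : ∀ s ∈ Icc x u, |q s Λ₁ * lam s - q s Λ₂ * lam s| ≤ K * S * lam s := by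
    intro s hs
    have hs0 : 0 ≤ s := hε.trans (hx.trans hs.1)
    rw [← sub_mul, abs_mul, abs_of_nonneg (hlam_nonneg s)]
    refine mul_le_mul_of_nonneg_right ((hq s ⟨hs0, hs.2.trans hu⟩).trans ?_) (hlam_nonneg s)
    exact mul_le_mul_of_nonneg_left (sSup_image_Icc_mono hbdd hs0 (hs.2.trans hub) hb) hK
  have hF : (K * ∫ s in ε..u, lam s) - K * ∫ s in ε..x, lam s = K * ∫ s in x..u, lam s := by
    rw [← mul_sub, intervalIntegral.integral_interval_sub_left
      (hlam_int.intervalIntegrable_of_Icc_subset le_rfl (hx.trans hxu) hu)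
      (hlam_int.intervalIntegrable_of_Icc_subset le_rfl hx (hxu.trans hu))]
  have := abs_sub_le_abs_sub_add_integral hxu
    (hint₁.intervalIntegrable_of_Icc_subset hx hxu hu)
    (hint₂.intervalIntegrable_of_Icc_subset hx hxu hu) (hlam_xu.const_mul (K * S))
    (sub_eq_integral_of_eq_add_integral hint₁ heq₁ hx hxu hu)
    (sub_eq_integral_of_eq_add_integral hint₂ heq₂ hx hxu hu) hbound
  rwa [intervalIntegral.integral_const_mul, mul_right_comm, ← hF] at this

end Volterra

theorem volterra_initial_segment_stability_general
    (τ : ℝ)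
    (lam : ℝ → ℝ) (hlam_nonneg : ∀ s, 0 ≤ lam s)
    (hlam_int : IntegrableOn lam (Set.Icc 0 τ))
    (K : ℝ) (hK : 0 ≤ K)
    (q : ℝ → (ℝ → ℝ) → ℝ)
    (hq : ∀ s ∈ Set.Icc (0 : ℝ) τ, ∀ Λ₁ Λ₂ : ℝ → ℝ,
      (∃ M : ℝ, ∀ u ∈ Set.Icc (0 : ℝ) τ, |Λ₁ u| ≤ M) →
      (∃ M : ℝ, ∀ u ∈ Set.Icc (0 : ℝ) τ, |Λ₂ u| ≤ M) →
      |q s Λ₁ - q s Λ₂| ≤ K * sSup ((fun u => |Λ₁ u - Λ₂ u|) '' Set.Icc 0 s))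
    (ε : ℝ) (hε : ε ∈ Set.Icc (0 : ℝ) τ)
    (Λ₁ Λ₂ : ℝ → ℝ)
    (hbdd₁ : ∃ M : ℝ, ∀ u ∈ Set.Icc (0 : ℝ) τ, |Λ₁ u| ≤ M)
    (hbdd₂ : ∃ M : ℝ, ∀ u ∈ Set.Icc (0 : ℝ) τ, |Λ₂ u| ≤ M)
    (hint₁ : IntegrableOn (fun s => q s Λ₁ * lam s) (Set.Icc ε τ))
    (hint₂ : IntegrableOn (fun s => q s Λ₂ * lam s) (Set.Icc ε τ))
    (heq₁ : ∀ t ∈ Set.Icc ε τ, Λ₁ t = Λ₁ ε + ∫ s in ε..t, q s Λ₁ * lam s)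
    (heq₂ : ∀ t ∈ Set.Icc ε τ, Λ₂ t = Λ₂ ε + ∫ s in ε..t, q s Λ₂ * lam s) :
    ∀ t ∈ Set.Icc ε τ,
      |Λ₁ t - Λ₂ t| ≤
        (sSup ((fun u => |Λ₁ u - Λ₂ u|) '' Set.Icc 0 ε)) *
          Real.exp (K * ∫ s in ε..τ, lam s) := by
  rintro t ⟨hεt, htτ⟩
  obtain ⟨hε0, hετ⟩ := hε
  set Δ : ℝ → ℝ := fun u => |Λ₁ u - Λ₂ u|
  set F : ℝ → ℝ := fun x => K * ∫ s in ε..x, lam s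
  have hlam_int' : IntegrableOn lam (Icc ε τ) := hlam_int.mono_set (Icc_subset_Icc_left hε0)
  have hbdd : BddAbove (Δ '' Icc 0 τ) := bddAbove_image_abs_sub hbdd₁ hbdd₂
  have hF : ContinuousOn F (Icc ε τ) := by
    have := intervalIntegral.continuousOn_primitive_interval (a := ε) (b := τ)
      (by rwa [uIcc_of_le hετ])
    exact continuousOn_const.mul (by rwa [uIcc_of_le hετ] at this)
  have hFmono : MonotoneOn F (Icc ε τ) := fun x hx y hy hxy =>
    mul_le_mul_of_nonneg_left (intervalIntegral.integral_mono_interval le_rfl hx.1 hxy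
      (ae_of_all _ hlam_nonneg) (hlam_int'.intervalIntegrable_of_Icc_subset le_rfl hy.1 hy.2)) hK
  have hgronwall := le_mul_exp_sub_of_le_add_sub_mul hετ hF hFmono
    (fun x hx => sSup_image_Icc_nonneg (fun _ => abs_nonneg _) hbdd (hε0.trans hx.1) hx.2)
    (fun x hx y hy hxy => sSup_image_Icc_le_add_sub_mul hε0 (fun _ => abs_nonneg _) hbdd hFmono
      (fun x u b => abs_sub_le_of_volterra hlam_nonneg hlam_int' hK hε0 hbdd
        (fun s hs => hq s hs Λ₁ Λ₂ hbdd₁ hbdd₂) hint₁ hint₂ heq₁ heq₂) hx.1 hxy hy.2)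
  calc Δ t ≤ sSup (Δ '' Icc 0 τ) := le_sSup_image_Icc hbdd ⟨hε0.trans hεt, htτ⟩ le_rfl
    _ ≤ _ := by simpa [F] using hgronwall

/-- Hartman-type stability in the initial segment: if two
bounded measurable functions solve the same Volterra-type equation
`Λ(t) = Λ(ε) + ∫_ε^t q(s,Λ) λ(s) ds` on `[ε,τ]`, where `q` has the
Lipschitz-like property with constant `K`, then on `[ε,τ]` their difference is
bounded by `(sup_{u ∈ [0,ε]} |Λ₁(u) − Λ₂(u)|) · exp(K ∫_ε^τ λ)`. -/
theorem volterra_initial_segment_stability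
    (τ : ℝ) (hτ : 0 < τ)
    (lam : ℝ → ℝ) (hlam_nonneg : ∀ s, 0 ≤ lam s)
    (hlam_int : IntegrableOn lam (Set.Icc 0 τ))
    (K : ℝ) (hK : 0 ≤ K)
    (q : ℝ → (ℝ → ℝ) → ℝ)
    (hq : ∀ s ∈ Set.Icc (0 : ℝ) τ, ∀ Λ₁ Λ₂ : ℝ → ℝ,
      (∃ M : ℝ, ∀ u ∈ Set.Icc (0 : ℝ) τ, |Λ₁ u| ≤ M) →
      (∃ M : ℝ, ∀ u ∈ Set.Icc (0 : ℝ) τ, |Λ₂ u| ≤ M) →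
      |q s Λ₁ - q s Λ₂| ≤ K * sSup ((fun u => |Λ₁ u - Λ₂ u|) '' Set.Icc 0 s))
    (ε : ℝ) (hε : ε ∈ Set.Icc (0 : ℝ) τ)
    (Λ₁ Λ₂ : ℝ → ℝ)
    (hmeas₁ : Measurable Λ₁) (hmeas₂ : Measurable Λ₂)
    (hbdd₁ : ∃ M : ℝ, ∀ u ∈ Set.Icc (0 : ℝ) τ, |Λ₁ u| ≤ M)
    (hbdd₂ : ∃ M : ℝ, ∀ u ∈ Set.Icc (0 : ℝ) τ, |Λ₂ u| ≤ M)
    (hint₁ : IntegrableOn (fun s => q s Λ₁ * lam s) (Set.Icc ε τ))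
    (hint₂ : IntegrableOn (fun s => q s Λ₂ * lam s) (Set.Icc ε τ))
    (heq₁ : ∀ t ∈ Set.Icc ε τ, Λ₁ t = Λ₁ ε + ∫ s in ε..t, q s Λ₁ * lam s)
    (heq₂ : ∀ t ∈ Set.Icc ε τ, Λ₂ t = Λ₂ ε + ∫ s in ε..t, q s Λ₂ * lam s) :
    ∀ t ∈ Set.Icc ε τ,
      |Λ₁ t - Λ₂ t| ≤
        (sSup ((fun u => |Λ₁ u - Λ₂ u|) '' Set.Icc 0 ε)) *
          Real.exp (K * ∫ s in ε..τ, lam s) :=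
  volterra_initial_segment_stability_general τ lam hlam_nonneg hlam_int K hK q hq ε hε Λ₁ Λ₂ hbdd₁
    hbdd₂ hint₁ hint₂ heq₁ heq₂
end

section
/- (Gronwall inequality for measures / product integrals.) Let τ > 0, let μ be a finite Borel measure on [0,τ], let a ≥ 0, and let g : [0,τ] → [0,∞) be a bounded measurable function satisfying g(t) ≤ a + ∫_{[0,t)} g(s) dμ(s) for every t ∈ [0,τ]. Then g(t) ≤ a · exp(μ([0,t))) for every t ∈ [0,τ]. -/
/-!
Write `F s = μ [0, s)`. The superlevel set `{s ∈ [0, t) | x ≤ F s}` is a final segment of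
`[0, t)` whose complement already carries mass `≥ x`, so its measure is at most `F t - x`: the
image of `μ` on `[0, t)` under `F` is dominated by Lebesgue measure on `[0, F t]`. Through the
layer-cake formula this gives `∫_{[0,t)} e^F dμ ≤ ∫_0^{F t} e^y dy = e^{F t} - 1`. Hence
`g ≤ u e^F` on `[0, τ]` implies `g ≤ a + u (e^F - 1)`, and for the least such `u` the latter bound
is of the form `u' e^F` with `u' < u` unless `u ≤ a`.
-/

open MeasureTheory Set Filter Topology
open scoped ENNReal

section

variable {μ : Measure ℝ} [IsFiniteMeasure μ]

lemma monotone_measure_Ico_toReal (r : ℝ) : Monotone fun s => (μ (Ico r s)).toReal :=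
  fun _ _ hst => ENNReal.toReal_mono (measure_ne_top μ _) (measure_mono (Ico_subset_Ico_right hst))

lemma le_measure_Icc_of_forall_lt {m : ℝ≥0∞} {r c : ℝ} (h : ∀ s, c < s → m ≤ μ (Ico r s)) :
    m ≤ μ (Icc r c) := by
  have hlim : Tendsto (fun s => μ (Ico r s)) (𝓝[>] c) (𝓝 (μ (⋂ s > c, Ico r s))) :=
    tendsto_measure_biInter_gt (fun _ _ => nullMeasurableSet_Ico)
      (fun _ _ _ hij => Ico_subset_Ico_right hij) ⟨c + 1, by linarith, measure_ne_top μ _⟩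
  have hinter : ⋂ s > c, Ico r s = Icc r c := by
    ext y
    simp only [mem_iInter, mem_Ico, mem_Icc]
    refine ⟨fun hy => ⟨(hy (c + 1) (by linarith)).1, le_of_forall_gt fun s hs => (hy s hs).2⟩,
      fun hy s hs => ⟨hy.1, hy.2.trans_lt hs⟩⟩
  rw [hinter] at hlim
  exact ge_of_tendsto hlim (eventually_nhdsWithin_of_forall h)

lemma measure_Ico_inter_le_sub (r t x : ℝ) :
    μ (Ico r t ∩ {s | x ≤ (μ (Ico r s)).toReal}) ≤
      ENNReal.ofReal ((μ (Ico r t)).toReal - x) := by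
  set F : ℝ → ℝ := fun s => (μ (Ico r s)).toReal
  set A := Ico r t ∩ {s | x ≤ F s}
  have hF_le_iff : ∀ s, ENNReal.ofReal x ≤ μ (Ico r s) ↔ x ≤ F s :=
    fun s => ENNReal.ofReal_le_iff_le_toReal (measure_ne_top μ _)
  rcases A.eq_empty_or_nonempty with hA | hA
  · simp [hA]
  have hbdd : BddBelow A := ⟨r, fun s hs => hs.1.1⟩
  set c := sInf A
  have hct : c < t := (csInf_le hbdd hA.some_mem).trans_lt hA.some_mem.1.2
  have hcA : ∀ s ∈ A, c ≤ s := fun s hs => csInf_le hbdd hs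
  -- `[r, c] \ A` is `[r, c)` or `[r, c]`, according as the infimum `c` is attained or not.
  have hmass : ENNReal.ofReal x ≤ μ (Icc r c \ A) := by
    by_cases hc : c ∈ A
    · calc ENNReal.ofReal x ≤ μ (Ico r c) := (hF_le_iff c).2 hc.2
        _ ≤ μ (Icc r c \ A) := measure_mono fun y hy =>
            ⟨Ico_subset_Icc_self hy, fun hyA => hy.2.not_ge (hcA y hyA)⟩
    · have hdisj : Icc r c \ A = Icc r c :=
        sdiff_eq_left.2 <| disjoint_left.2 fun y hy hyA =>
          hc (le_antisymm hy.2 (hcA y hyA) ▸ hyA)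
      rw [hdisj]
      refine le_measure_Icc_of_forall_lt fun s hs => ?_
      obtain ⟨a, haA, has⟩ := exists_lt_of_csInf_lt hA hs
      exact (hF_le_iff s).2 (haA.2.trans (monotone_measure_Ico_toReal r has.le))
  have hA_meas : MeasurableSet A :=
    measurableSet_Ico.inter ((monotone_measure_Ico_toReal r).measurable measurableSet_Ici)
  have hsplit : μ A + μ (Icc r c \ A) ≤ μ (Ico r t) := by
    rw [← measure_union disjoint_sdiff_right (measurableSet_Icc.diff hA_meas)]
    exact measure_mono (union_subset inter_subset_left
      fun y hy => ⟨hy.1.1, hy.1.2.trans_lt hct⟩)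
  calc μ A ≤ μ (Ico r t) - ENNReal.ofReal x :=
        ENNReal.le_sub_of_add_le_right ENNReal.ofReal_ne_top
          ((add_le_add_right hmass _).trans hsplit)
    _ = ENNReal.ofReal (F t) - ENNReal.ofReal x := by
        rw [ENNReal.ofReal_toReal (measure_ne_top μ _)]
    _ ≤ ENNReal.ofReal (F t - x) :=
        tsub_le_iff_right.2 (by simpa using ENNReal.ofReal_add_le (p := F t - x) (q := x))

lemma lintegral_comp_measure_Ico_le {φ : ℝ → ℝ}
    (hφ_int : ∀ y > 0, IntervalIntegrable φ volume 0 y) (hφ_nonneg : ∀ y > 0, 0 ≤ φ y)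
    (r t : ℝ) :
    ∫⁻ s in Ico r t, ENNReal.ofReal (∫ y in 0..(μ (Ico r s)).toReal, φ y) ∂μ ≤
      ∫⁻ z in Ioc 0 (μ (Ico r t)).toReal, ENNReal.ofReal (∫ y in 0..z, φ y) := by
  set F : ℝ → ℝ := fun s => (μ (Ico r s)).toReal
  have hφ_nonneg' : ∀ᵐ y ∂volume.restrict (Ioi 0), 0 ≤ φ y :=
    ae_restrict_of_forall_mem measurableSet_Ioi hφ_nonneg
  rw [lintegral_comp_eq_lintegral_meas_le_mul _ (ae_of_all _ fun _ => ENNReal.toReal_nonneg)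
      (monotone_measure_Ico_toReal r).measurable.aemeasurable hφ_int hφ_nonneg',
    lintegral_comp_eq_lintegral_meas_le_mul (f := fun z => z) (volume.restrict (Ioc 0 (F t)))
      (ae_restrict_of_forall_mem measurableSet_Ioc fun z hz => hz.1.le)
      aemeasurable_id' hφ_int hφ_nonneg']
  refine setLIntegral_mono' measurableSet_Ioi fun x (hx : 0 < x) => ?_
  gcongr ?_ * _
  have hlevel : {z : ℝ | x ≤ z} ∩ Ioc 0 (F t) = Icc x (F t) := by
    ext z
    simp only [mem_inter_iff, mem_ofPred_eq, mem_Ioc, mem_Icc]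
    exact ⟨fun h => ⟨h.1, h.2.2⟩, fun h => ⟨h.1, hx.trans_le h.1, h.2⟩⟩
  rw [Measure.restrict_apply' measurableSet_Ico, Measure.restrict_apply' measurableSet_Ioc,
    hlevel, Real.volume_Icc, inter_comm]
  exact measure_Ico_inter_le_sub r t x

lemma integrableOn_exp_measure_Ico (r t : ℝ) :
    IntegrableOn (fun s => Real.exp (μ (Ico r s)).toReal) (Ico r t) μ := by
  refine Integrable.of_bound
    (Real.measurable_exp.comp (monotone_measure_Ico_toReal r).measurable).aestronglyMeasurable
    (Real.exp (μ univ).toReal) (ae_of_all _ fun s => ?_)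
  rw [Real.norm_of_nonneg (Real.exp_pos _).le, Real.exp_le_exp]
  exact ENNReal.toReal_mono (measure_ne_top μ _) (measure_mono (subset_univ _))

lemma integral_exp_measure_Ico_le (r t : ℝ) :
    ∫ s in Ico r t, Real.exp (μ (Ico r s)).toReal ∂μ ≤ Real.exp (μ (Ico r t)).toReal - 1 := by
  set F : ℝ → ℝ := fun s => (μ (Ico r s)).toReal
  set b := F t
  have hb : 0 ≤ b := ENNReal.toReal_nonneg
  have hexpF_int : IntegrableOn (fun s => Real.exp (F s)) (Ico r t) μ :=
    integrableOn_exp_measure_Ico r t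
  have hcomp := lintegral_comp_measure_Ico_le (μ := μ) (φ := Real.exp)
    (fun y _ => Real.continuous_exp.intervalIntegrable 0 y) (fun y _ => (Real.exp_pos y).le) r t
  have hlhs : ∫⁻ s in Ico r t, ENNReal.ofReal (Real.exp (F s) - 1) ∂μ =
      ENNReal.ofReal ((∫ s in Ico r t, Real.exp (F s) ∂μ) - b) := by
    rw [← ofReal_integral_eq_lintegral_ofReal (f := fun s => Real.exp (F s) - 1)
        (hexpF_int.sub (integrable_const 1))
        (ae_of_all _ fun s => sub_nonneg.2 (Real.one_le_exp ENNReal.toReal_nonneg)),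
      integral_sub hexpF_int (integrable_const 1)]
    simp [b, F, Measure.real]
  have hrhs : ∫⁻ z in Ioc 0 b, ENNReal.ofReal (Real.exp z - 1) =
      ENNReal.ofReal (Real.exp b - 1 - b) := by
    rw [← ofReal_integral_eq_lintegral_ofReal (f := fun z => Real.exp z - 1)
        ((Real.continuous_exp.sub continuous_const).integrableOn_Icc.mono_set Ioc_subset_Icc_self)
        (ae_restrict_of_forall_mem measurableSet_Ioc fun z hz =>
          sub_nonneg.2 (Real.one_le_exp hz.1.le)),
      ← intervalIntegral.integral_of_le hb,
      intervalIntegral.integral_sub (Real.continuous_exp.intervalIntegrable _ _)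
        intervalIntegrable_const]
    simp
  simp only [integral_exp, Real.exp_zero] at hcomp
  rw [hlhs, hrhs, ENNReal.ofReal_le_ofReal_iff (by linarith [Real.add_one_le_exp b])] at hcomp
  linarith

lemma le_add_mul_exp_sub_one_of_le_mul_exp {g : ℝ → ℝ} {a C r τ : ℝ} (hC : 0 ≤ C)
    (hg_int : ∀ t ∈ Icc r τ, IntegrableOn g (Ico r t) μ)
    (hg_ineq : ∀ t ∈ Icc r τ, g t ≤ a + ∫ s in Ico r t, g s ∂μ)
    (hg_le : ∀ t ∈ Icc r τ, g t ≤ C * Real.exp (μ (Ico r t)).toReal) :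
    ∀ t ∈ Icc r τ, g t ≤ a + C * (Real.exp (μ (Ico r t)).toReal - 1) := by
  intro t ht
  calc g t ≤ a + ∫ s in Ico r t, g s ∂μ := hg_ineq t ht
    _ ≤ a + ∫ s in Ico r t, C * Real.exp (μ (Ico r s)).toReal ∂μ := by
        gcongr a + ?_
        exact setIntegral_mono_on (hg_int t ht) ((integrableOn_exp_measure_Ico r t).const_mul C)
          measurableSet_Ico fun s hs => hg_le s ⟨hs.1, hs.2.le.trans ht.2⟩
    _ = a + C * ∫ s in Ico r t, Real.exp (μ (Ico r s)).toReal ∂μ := by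
        rw [integral_const_mul]
    _ ≤ a + C * (Real.exp (μ (Ico r t)).toReal - 1) := by
        gcongr
        exact integral_exp_measure_Ico_le r t

end

lemma exists_isLeast_mul_exp_bound {g F : ℝ → ℝ} {S : Set ℝ} (hS : S.Nonempty)
    (hF : ∀ x, 0 ≤ F x) (hg : ∃ M, ∀ x ∈ S, g x ≤ M) :
    ∃ u, IsLeast {C | ∀ x ∈ S, g x ≤ C * Real.exp (F x)} u := by
  set B := {C | ∀ x ∈ S, g x ≤ C * Real.exp (F x)}
  obtain ⟨M, hM⟩ := hg
  obtain ⟨x₀, hx₀⟩ := hS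
  have hB_closed : IsClosed B := by
    simp only [B, ofPred_forall]
    exact isClosed_iInter fun x => isClosed_iInter fun _ =>
      isClosed_le continuous_const (continuous_id.mul continuous_const)
  have hB_nonempty : B.Nonempty := ⟨max M 0, fun x hx =>
    (hM x hx).trans <| (le_max_left M 0).trans <|
      le_mul_of_one_le_right (le_max_right M 0) (Real.one_le_exp (hF x))⟩
  have hB_bdd : BddBelow B := ⟨g x₀ / Real.exp (F x₀), fun C hC =>
    (div_le_iff₀ (Real.exp_pos _)).2 (hC x₀ hx₀)⟩
  exact ⟨sInf B, hB_closed.csInf_mem hB_nonempty hB_bdd, fun C hC => csInf_le hB_bdd hC⟩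

theorem gronwall_for_measures_general
    (τ : ℝ)
    (μ : Measure ℝ) [IsFiniteMeasure μ]
    (a : ℝ)
    (g : ℝ → ℝ) (hg_meas : Measurable g)
    (hg_nonneg : ∀ t, 0 ≤ g t)
    (hg_bdd : ∃ M : ℝ, ∀ t ∈ Set.Icc (0 : ℝ) τ, g t ≤ M)
    (hg_ineq : ∀ t ∈ Set.Icc (0 : ℝ) τ,
      g t ≤ a + ∫ s in Set.Ico (0 : ℝ) t, g s ∂μ) :
    ∀ t ∈ Set.Icc (0 : ℝ) τ,
      g t ≤ a * Real.exp ((μ (Set.Ico (0 : ℝ) t)).toReal) := by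
  intro t ht
  set F : ℝ → ℝ := fun s => (μ (Ico 0 s)).toReal
  obtain ⟨M, hM⟩ := hg_bdd
  have hg_int : ∀ s ∈ Icc 0 τ, IntegrableOn g (Ico 0 s) μ := fun s hs =>
    Integrable.of_bound hg_meas.aestronglyMeasurable M <|
      ae_restrict_of_forall_mem measurableSet_Ico fun y hy => by
        rw [Real.norm_of_nonneg (hg_nonneg y)]
        exact hM y ⟨hy.1, hy.2.le.trans hs.2⟩
  obtain ⟨u, hu_bound, hu_least⟩ :=
    exists_isLeast_mul_exp_bound ⟨t, ht⟩ (fun _ => ENNReal.toReal_nonneg) ⟨M, hM⟩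
  have hu : 0 ≤ u :=
    nonneg_of_mul_nonneg_left ((hg_nonneg t).trans (hu_bound t ht)) (Real.exp_pos _)
  have hg_le := le_add_mul_exp_sub_one_of_le_mul_exp hu hg_int hg_ineq hu_bound
  have hua : u ≤ a := by
    by_contra! hau
    have hδ : 0 < (u - a) * Real.exp (-F τ) := mul_pos (sub_pos.2 hau) (Real.exp_pos _)
    refine (hu_least fun s hs => ?_).not_gt (sub_lt_self u hδ)
    have hexp : Real.exp (-F τ) * Real.exp (F s) ≤ 1 := by
      rw [← Real.exp_add, Real.exp_le_one_iff, neg_add_le_iff_le_add, add_zero]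
      exact monotone_measure_Ico_toReal 0 hs.2
    have hdrop := mul_le_mul_of_nonneg_left hexp (sub_pos.2 hau).le
    calc g s ≤ a + u * (Real.exp (F s) - 1) := hg_le s hs
      _ ≤ (u - (u - a) * Real.exp (-F τ)) * Real.exp (F s) := by linear_combination hdrop
  calc g t ≤ u * Real.exp (F t) := hu_bound t ht
    _ ≤ a * Real.exp (F t) := by gcongr

/-- Gronwall inequality for measures / product integrals: if `μ`
is a finite Borel measure on `ℝ`, `a ≥ 0`, and `g : [0,τ] → [0,∞)` is bounded
measurable with `g(t) ≤ a + ∫_{[0,t)} g dμ` for all `t ∈ [0,τ]`, then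
`g(t) ≤ a · exp(μ([0,t)))` for all `t ∈ [0,τ]`. -/
theorem gronwall_for_measures
    (τ : ℝ) (hτ : 0 < τ)
    (μ : Measure ℝ) [IsFiniteMeasure μ]
    (a : ℝ) (ha : 0 ≤ a)
    (g : ℝ → ℝ) (hg_meas : Measurable g)
    (hg_nonneg : ∀ t, 0 ≤ g t)
    (hg_bdd : ∃ M : ℝ, ∀ t ∈ Set.Icc (0 : ℝ) τ, g t ≤ M)
    (hg_ineq : ∀ t ∈ Set.Icc (0 : ℝ) τ,
      g t ≤ a + ∫ s in Set.Ico (0 : ℝ) t, g s ∂μ) :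
    ∀ t ∈ Set.Icc (0 : ℝ) τ,
      g t ≤ a * Real.exp ((μ (Set.Ico (0 : ℝ) t)).toReal) :=
  gronwall_for_measures_general τ μ a g hg_meas hg_nonneg hg_bdd hg_ineq
end

section
/- (Decomposition lemma for stochastic processes, Section 9.4.1.) Let (Ω,ℱ,P) be a probability space and τ > 0. For each n ∈ ℕ let R_n, S_n : Ω × [0,τ] → ℝ and A_n, B_n : Ω × [0,τ] × [0,τ] → ℝ (the last argument playing the role of ε, with ε = 0 allowed) be maps such that every supremum appearing below is a measurable function of ω. Assume: (H0) for every δ > 0 there exists M > 0 with limsup_n P(sup_{t ∈ [0,τ], ε ∈ [0,τ]} (|A_n(t,ε)| + |B_n(t,ε)|) > M) ≤ δ; (H1) for every fixed ε > 0, sup_{t ∈ [ε,τ]} √n |(R_n(t) − A_n(t,ε) R_n(ε)) − B_n(t,ε)(S_n(t) − S_n(ε))| → 0 in probability as n → ∞; (H2) for every δ > 0, lim_{ε↓0} limsup_n P(sup_{t ∈ [0,ε]} √n |R_n(t)| > δ) = 0; (H3) for every δ > 0, lim_{ε↓0} limsup_n P(sup_{t ∈ [0,ε]} √n |S_n(t)|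 > δ) = 0; (H4) for all δ, ρ > 0 there exists ε₀ > 0 with limsup_n P(sup_{t ∈ [0,τ], ε ∈ (0,ε₀]} |B_n(t,ε) − B_n(t,0)| > ρ) ≤ δ; (H5) for every δ > 0 there exists M > 0 with limsup_n P(sup_{t ∈ [0,τ]} √n |S_n(t)| > M) ≤ δ. Then sup_{t ∈ [0,τ]} √n |R_n(t) − B_n(t,0)(S_n(t) − S_n(0))| → 0 in probability as n → ∞. -/
open MeasureTheory Set Filter
open scoped ENNReal

/-!
Fix a small `ε > 0`. For `t ≤ ε` both `√n R_n(t)` and `√n S_n(t)` are small by (H2), (H3),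
and `B_n` is bounded by (H0). For `t ≥ ε`, (H1) replaces `R_n(t)` by
`A_n(t,ε) R_n(ε) + B_n(t,ε) (S_n(t) - S_n(ε))`; the first term is small by (H0), (H2),
replacing `B_n(t,ε)` by `B_n(t,0)` costs (H4) times (H5), and replacing `S_n(ε)` by `S_n(0)`
costs (H0) times (H3). With `ε` chosen from (H2)–(H4), the supremum exceeds `δ` only on six
events whose limsup probabilities add up to at most any prescribed `η > 0`.
-/

theorem mul_abs_sub_mul_sub_le {c r b s s₀ δ₂ δ₃ M : ℝ} (hc : 0 ≤ c) (hb : |b| ≤ M)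
    (hr : c * |r| ≤ δ₂) (hs : c * |s| ≤ δ₃) (hs₀ : c * |s₀| ≤ δ₃) :
    c * |r - b * (s - s₀)| ≤ δ₂ + 2 * M * δ₃ := by
  have hM : 0 ≤ M := (abs_nonneg b).trans hb
  calc c * |r - b * (s - s₀)| ≤ c * (|r| + |b| * (|s| + |s₀|)) := by
        grw [abs_sub, abs_mul, abs_sub]
    _ = c * |r| + |b| * (c * |s| + c * |s₀|) := by ring
    _ ≤ δ₂ + M * (δ₃ + δ₃) := by gcongr
    _ = δ₂ + 2 * M * δ₃ := by ring

theorem mul_abs_sub_mul_sub_le_of_decomposition {c r rε a b bε s sε s₀ δ₁ δ₂ δ₃ ρ M₁ M₂ : ℝ}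
    (hc : 0 ≤ c) (ha : |a| ≤ M₁) (hb : |b| ≤ M₁) (hbε : |bε - b| ≤ ρ)
    (hdecomp : c * |r - a * rε - bε * (s - sε)| ≤ δ₁) (hrε : c * |rε| ≤ δ₂)
    (hs : c * |s| ≤ M₂) (hsε : c * |sε| ≤ M₂) (hsε' : c * |sε| ≤ δ₃) (hs₀ : c * |s₀| ≤ δ₃) :
    c * |r - b * (s - s₀)| ≤ δ₁ + M₁ * δ₂ + 2 * ρ * M₂ + 2 * M₁ * δ₃ := by
  generalize hd : r - a * rε - bε * (s - sε) = d at hdecomp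
  have hM₁ : 0 ≤ M₁ := (abs_nonneg _).trans ha
  have hρ : 0 ≤ ρ := (abs_nonneg _).trans hbε
  have hr : c * |d + a * rε + (bε - b) * (s - sε)| ≤ δ₁ + M₁ * δ₂ + 2 * ρ * M₂ :=
    calc c * |d + a * rε + (bε - b) * (s - sε)|
        ≤ c * (|d| + |a| * |rε| + |bε - b| * (|s| + |sε|)) := by
          grw [abs_add_le, abs_add_le, abs_mul, abs_mul, abs_sub s]
      _ = c * |d| + |a| * (c * |rε|) + |bε - b| * (c * |s| + c * |sε|) := by ring
      _ ≤ δ₁ + M₁ * δ₂ + ρ * (M₂ + M₂) := by gcongr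
      _ = δ₁ + M₁ * δ₂ + 2 * ρ * M₂ := by ring
  calc c * |r - b * (s - s₀)|
      = c * |(d + a * rε + (bε - b) * (s - sε)) - b * (sε - s₀)| := by rw [← hd]; ring_nf
    _ ≤ δ₁ + M₁ * δ₂ + 2 * ρ * M₂ + 2 * M₁ * δ₃ := mul_abs_sub_mul_sub_le hc hb hr hsε' hs₀

theorem mul_abs_sub_mul_sub_le_of_pathwise {r s : ℝ → ℝ} {a b : ℝ → ℝ → ℝ}
    {c τ ε δ δ₁ δ₂ δ₃ ρ M₁ M₂ t : ℝ} (hc : 0 ≤ c) (hε : 0 < ε) (hετ : ε ≤ τ)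
    (hsmall : δ₂ + 2 * M₁ * δ₃ ≤ δ) (hlarge : δ₁ + M₁ * δ₂ + 2 * ρ * M₂ + 2 * M₁ * δ₃ ≤ δ)
    (h0 : ∀ t ∈ Icc 0 τ, ∀ e ∈ Icc 0 τ, |a t e| + |b t e| ≤ M₁)
    (h1 : ∀ t ∈ Icc ε τ, c * |r t - a t ε * r ε - b t ε * (s t - s ε)| ≤ δ₁)
    (h2 : ∀ t ∈ Icc 0 ε, c * |r t| ≤ δ₂) (h3 : ∀ t ∈ Icc 0 ε, c * |s t| ≤ δ₃)
    (h4 : ∀ t ∈ Icc 0 τ, |b t ε - b t 0| ≤ ρ) (h5 : ∀ t ∈ Icc 0 τ, c * |s t| ≤ M₂)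
    (ht : t ∈ Icc 0 τ) :
    c * |r t - b t 0 * (s t - s 0)| ≤ δ := by
  have hε₀ : ε ∈ Icc 0 ε := ⟨hε.le, le_rfl⟩
  have hετ₀ : ε ∈ Icc 0 τ := ⟨hε.le, hετ⟩
  have hb : |b t 0| ≤ M₁ :=
    (le_add_of_nonneg_left (abs_nonneg _)).trans (h0 t ht 0 ⟨le_rfl, hετ₀.1.trans hετ⟩)
  have hs₀ := h3 0 ⟨le_rfl, hε.le⟩
  rcases le_or_gt t ε with hle | hlt
  · exact (mul_abs_sub_mul_sub_le hc hb (h2 t ⟨ht.1, hle⟩) (h3 t ⟨ht.1, hle⟩) hs₀).trans hsmall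
  · have ha : |a t ε| ≤ M₁ := (le_add_of_nonneg_right (abs_nonneg _)).trans (h0 t ht ε hετ₀)
    exact (mul_abs_sub_mul_sub_le_of_decomposition hc ha hb (h4 t ht) (h1 t ⟨hlt.le, ht.2⟩)
      (h2 ε hε₀) (h5 t ht) (h5 ε hετ₀) (h3 ε hε₀) hs₀).trans hlarge

theorem MeasureTheory.limsup_measure_union_le {α Ω : Type*} [MeasurableSpace Ω]
    (P : Measure Ω) {f : Filter α} (E F : α → Set Ω) :
    limsup (fun n => P (E n ∪ F n)) f ≤
      limsup (fun n => P (E n)) f + limsup (fun n => P (F n)) f := by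
  refine le_of_forall_gt fun c hc => ?_
  obtain ⟨a, ha, b, hb, hab⟩ := ENNReal.exists_add_lt_of_add_lt hc
  refine (limsup_le_of_le (by isBoundedDefault) ?_).trans_lt hab
  filter_upwards [eventually_lt_of_limsup_lt ha, eventually_lt_of_limsup_lt hb] with n hEn hFn
  exact (measure_union_le _ _).trans (add_le_add hEn.le hFn.le)

theorem ENNReal.tendsto_nhds_zero_of_forall_limsup_le {α : Type*} {f : Filter α} {u : α → ℝ≥0∞}
    (h : ∀ η : ℝ, 0 < η → limsup u f ≤ ENNReal.ofReal η) : Tendsto u f (nhds 0) := by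
  refine tendsto_of_le_liminf_of_limsup_le zero_le
    (ENNReal.le_of_forall_pos_le_add fun η hη _ => ?_)
  simpa using h η hη

theorem limsup_measure_decomposition_le {Ω : Type*} [MeasurableSpace Ω] (P : Measure Ω)
    (τ : ℝ) (R S : ℕ → Ω → ℝ → ℝ) (A B : ℕ → Ω → ℝ → ℝ → ℝ)
    {ε ε₀ δ δ₁ δ₂ δ₃ ρ M₁ M₂ : ℝ} (hε : 0 < ε) (hετ : ε ≤ τ) (hεε₀ : ε ≤ ε₀)
    (hsmall : δ₂ + 2 * M₁ * δ₃ ≤ δ) (hlarge : δ₁ + M₁ * δ₂ + 2 * ρ * M₂ + 2 * M₁ * δ₃ ≤ δ) :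
    limsup (fun n : ℕ => P {ω | ∃ t ∈ Icc 0 τ,
      δ < √n * |R n ω t - B n ω t 0 * (S n ω t - S n ω 0)|}) atTop ≤
    limsup (fun n : ℕ => P {ω | ∃ t ∈ Icc 0 τ, ∃ e ∈ Icc 0 τ,
      M₁ < |A n ω t e| + |B n ω t e|}) atTop +
    (limsup (fun n : ℕ => P {ω | ∃ t ∈ Icc ε τ,
      δ₁ < √n * |R n ω t - A n ω t ε * R n ω ε - B n ω t ε * (S n ω t - S n ω ε)|}) atTop +
    (limsup (fun n : ℕ => P {ω | ∃ t ∈ Icc 0 ε, δ₂ < √n * |R n ω t|}) atTop +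
    (limsup (fun n : ℕ => P {ω | ∃ t ∈ Icc 0 ε, δ₃ < √n * |S n ω t|}) atTop +
    (limsup (fun n : ℕ => P {ω | ∃ t ∈ Icc 0 τ, ∃ e ∈ Ioc 0 ε₀,
      ρ < |B n ω t e - B n ω t 0|}) atTop +
    limsup (fun n : ℕ => P {ω | ∃ t ∈ Icc 0 τ, M₂ < √n * |S n ω t|}) atTop)))) := by
  refine le_trans (limsup_le_limsup (.of_forall fun n => measure_mono ?_)) <|
    (limsup_measure_union_le P _ _).trans <| add_le_add le_rfl <|
    (limsup_measure_union_le P _ _).trans <| add_le_add le_rfl <|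
    (limsup_measure_union_le P _ _).trans <| add_le_add le_rfl <|
    (limsup_measure_union_le P _ _).trans <| add_le_add le_rfl <|
    limsup_measure_union_le P _ _
  intro ω ⟨t, ht, hlt⟩
  by_contra hω
  simp only [mem_union, mem_ofPred_eq, not_or, not_exists, not_and, not_lt] at hω
  obtain ⟨h0, h1, h2, h3, h4, h5⟩ := hω
  exact hlt.not_ge (mul_abs_sub_mul_sub_le_of_pathwise (Real.sqrt_nonneg n) hε hετ hsmall hlarge
    h0 h1 h2 h3 (fun t ht => h4 t ht ε ⟨hε, hεε₀⟩) h5 ht)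

theorem decomposition_lemma_general
    {Ω : Type*} [MeasurableSpace Ω] (P : Measure Ω)
    (τ : ℝ) (hτ : 0 < τ)
    (R S : ℕ → Ω → ℝ → ℝ)
    (A B : ℕ → Ω → ℝ → ℝ → ℝ)
    -- (H0): A and B are uniformly bounded in probability
    (H0 : ∀ δ : ℝ, 0 < δ → ∃ M : ℝ, 0 < M ∧
      Filter.limsup (fun n : ℕ =>
        P {ω | ∃ t ∈ Set.Icc (0 : ℝ) τ, ∃ ε ∈ Set.Icc (0 : ℝ) τ,
          M < |A n ω t ε| + |B n ω t ε|}) Filter.atTop ≤ ENNReal.ofReal δ)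
    -- (H1): for fixed ε > 0, sup_{t ∈ [ε,τ]} √n |R_n(t,ε) − S_n(t,ε)| → 0 in pr.
    (H1 : ∀ ε : ℝ, 0 < ε → ∀ δ : ℝ, 0 < δ →
      Filter.Tendsto (fun n : ℕ =>
        P {ω | ∃ t ∈ Set.Icc ε τ,
          δ < Real.sqrt n * |(R n ω t - A n ω t ε * R n ω ε) -
            B n ω t ε * (S n ω t - S n ω ε)|})
        Filter.atTop (nhds 0))
    -- (H2): lim_{ε↓0} limsup_n P(sup_{t ∈ [0,ε]} √n |R_n(t)| > δ) = 0
    (H2 : ∀ δ : ℝ, 0 < δ →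
      Filter.Tendsto (fun ε : ℝ => Filter.limsup (fun n : ℕ =>
          P {ω | ∃ t ∈ Set.Icc (0 : ℝ) ε, δ < Real.sqrt n * |R n ω t|})
          Filter.atTop)
        (nhdsWithin 0 (Set.Ioi 0)) (nhds 0))
    -- (H3): lim_{ε↓0} limsup_n P(sup_{t ∈ [0,ε]} √n |S_n(t)| > δ) = 0
    (H3 : ∀ δ : ℝ, 0 < δ →
      Filter.Tendsto (fun ε : ℝ => Filter.limsup (fun n : ℕ =>
          P {ω | ∃ t ∈ Set.Icc (0 : ℝ) ε, δ < Real.sqrt n * |S n ω t|})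
          Filter.atTop)
        (nhdsWithin 0 (Set.Ioi 0)) (nhds 0))
    -- (H4): B_n(t,ε) → B_n(t,0) uniformly in t as ε → 0, w.pr. → 1
    (H4 : ∀ δ ρ : ℝ, 0 < δ → 0 < ρ → ∃ ε₀ : ℝ, 0 < ε₀ ∧
      Filter.limsup (fun n : ℕ =>
        P {ω | ∃ t ∈ Set.Icc (0 : ℝ) τ, ∃ ε ∈ Set.Ioc (0 : ℝ) ε₀,
          ρ < |B n ω t ε - B n ω t 0|}) Filter.atTop ≤ ENNReal.ofReal δ)
    -- (H5): sup_{t ∈ [0,τ]} √n |S_n(t)| is bounded in probability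
    (H5 : ∀ δ : ℝ, 0 < δ → ∃ M : ℝ, 0 < M ∧
      Filter.limsup (fun n : ℕ =>
        P {ω | ∃ t ∈ Set.Icc (0 : ℝ) τ, M < Real.sqrt n * |S n ω t|})
        Filter.atTop ≤ ENNReal.ofReal δ) :
    ∀ δ : ℝ, 0 < δ →
      Filter.Tendsto (fun n : ℕ =>
        P {ω | ∃ t ∈ Set.Icc (0 : ℝ) τ,
          δ < Real.sqrt n * |R n ω t - B n ω t 0 * (S n ω t - S n ω 0)|})
        Filter.atTop (nhds 0) := by
  intro δ hδ
  refine ENNReal.tendsto_nhds_zero_of_forall_limsup_le fun η hη => ?_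
  have hη₅ : 0 < η / 5 := by positivity
  obtain ⟨M₁, hM₁, hA⟩ := H0 (η / 5) hη₅
  obtain ⟨M₂, hM₂, hS⟩ := H5 (η / 5) hη₅
  obtain ⟨ε₀, hε₀, hB⟩ := H4 (η / 5) (δ / (8 * M₂)) hη₅ (by positivity)
  set θ := δ / (8 * (M₁ + 1)) with hθdef
  have hθ : 0 < θ := by positivity
  have hθM₁ : (M₁ + 1) * θ = δ / 8 := by rw [hθdef]; field_simp
  have hρM₂ : δ / (8 * M₂) * M₂ = δ / 8 := by field_simp
  have hsmall : θ + 2 * M₁ * θ ≤ δ := by nlinarith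
  have hlarge : δ / 4 + M₁ * θ + 2 * (δ / (8 * M₂)) * M₂ + 2 * M₁ * θ ≤ δ := by nlinarith
  have hη₅' : (0 : ℝ≥0∞) < ENNReal.ofReal (η / 5) := ENNReal.ofReal_pos.2 hη₅
  obtain ⟨ε, ⟨hε, hεmin⟩, hR, hS₀⟩ :=
    ((eventually_mem_set.2 (Ioc_mem_nhdsGT (lt_min hτ hε₀))).and
      (((H2 θ hθ).eventually (gt_mem_nhds hη₅')).and
        ((H3 θ hθ).eventually (gt_mem_nhds hη₅')))).exists
  have hdecomp := (H1 ε hε (δ / 4) (by positivity)).limsup_eq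
  calc _ ≤ ENNReal.ofReal (η / 5) + (0 + (ENNReal.ofReal (η / 5) + (ENNReal.ofReal (η / 5) +
          (ENNReal.ofReal (η / 5) + ENNReal.ofReal (η / 5))))) :=
        (limsup_measure_decomposition_le P τ R S A B hε (hεmin.trans (min_le_left _ _))
          (hεmin.trans (min_le_right _ _)) hsmall hlarge).trans
          (add_le_add hA <| add_le_add hdecomp.le <| add_le_add hR.le <| add_le_add hS₀.le <|
            add_le_add hB hS)
    _ = ENNReal.ofReal η := by
        rw [← ENNReal.ofReal_add, ← ENNReal.ofReal_add, ← ENNReal.ofReal_add, zero_add,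
          ← ENNReal.ofReal_add] <;> first | positivity | ring_nf

/-- Decomposition lemma for stochastic processes, Sec. 9.4.1:
under hypotheses (H0)–(H5), the process `√n |R_n(t) − B_n(t,0)(S_n(t) − S_n(0))|`
converges to 0 in probability uniformly in `t ∈ [0,τ]`. Suprema over `t`
(resp. `ε`) are expressed through the equivalent existential form
`sup > δ ↔ ∃ t, value > δ`, and probabilities of the corresponding events are
taken via the (outer) measure `P`. -/
theorem decomposition_lemma
    {Ω : Type*} [MeasurableSpace Ω] (P : Measure Ω) [IsProbabilityMeasure P]
    (τ : ℝ) (hτ : 0 < τ)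
    (R S : ℕ → Ω → ℝ → ℝ)
    (A B : ℕ → Ω → ℝ → ℝ → ℝ)
    -- (H0): A and B are uniformly bounded in probability
    (H0 : ∀ δ : ℝ, 0 < δ → ∃ M : ℝ, 0 < M ∧
      Filter.limsup (fun n : ℕ =>
        P {ω | ∃ t ∈ Set.Icc (0 : ℝ) τ, ∃ ε ∈ Set.Icc (0 : ℝ) τ,
          M < |A n ω t ε| + |B n ω t ε|}) Filter.atTop ≤ ENNReal.ofReal δ)
    -- (H1): for fixed ε > 0, sup_{t ∈ [ε,τ]} √n |R_n(t,ε) − S_n(t,ε)| → 0 in pr.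
    (H1 : ∀ ε : ℝ, 0 < ε → ∀ δ : ℝ, 0 < δ →
      Filter.Tendsto (fun n : ℕ =>
        P {ω | ∃ t ∈ Set.Icc ε τ,
          δ < Real.sqrt n * |(R n ω t - A n ω t ε * R n ω ε) -
            B n ω t ε * (S n ω t - S n ω ε)|})
        Filter.atTop (nhds 0))
    -- (H2): lim_{ε↓0} limsup_n P(sup_{t ∈ [0,ε]} √n |R_n(t)| > δ) = 0
    (H2 : ∀ δ : ℝ, 0 < δ →
      Filter.Tendsto (fun ε : ℝ => Filter.limsup (fun n : ℕ =>
          P {ω | ∃ t ∈ Set.Icc (0 : ℝ) ε, δ < Real.sqrt n * |R n ω t|})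
          Filter.atTop)
        (nhdsWithin 0 (Set.Ioi 0)) (nhds 0))
    -- (H3): lim_{ε↓0} limsup_n P(sup_{t ∈ [0,ε]} √n |S_n(t)| > δ) = 0
    (H3 : ∀ δ : ℝ, 0 < δ →
      Filter.Tendsto (fun ε : ℝ => Filter.limsup (fun n : ℕ =>
          P {ω | ∃ t ∈ Set.Icc (0 : ℝ) ε, δ < Real.sqrt n * |S n ω t|})
          Filter.atTop)
        (nhdsWithin 0 (Set.Ioi 0)) (nhds 0))
    -- (H4): B_n(t,ε) → B_n(t,0) uniformly in t as ε → 0, w.pr. → 1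
    (H4 : ∀ δ ρ : ℝ, 0 < δ → 0 < ρ → ∃ ε₀ : ℝ, 0 < ε₀ ∧
      Filter.limsup (fun n : ℕ =>
        P {ω | ∃ t ∈ Set.Icc (0 : ℝ) τ, ∃ ε ∈ Set.Ioc (0 : ℝ) ε₀,
          ρ < |B n ω t ε - B n ω t 0|}) Filter.atTop ≤ ENNReal.ofReal δ)
    -- (H5): sup_{t ∈ [0,τ]} √n |S_n(t)| is bounded in probability
    (H5 : ∀ δ : ℝ, 0 < δ → ∃ M : ℝ, 0 < M ∧
      Filter.limsup (fun n : ℕ =>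
        P {ω | ∃ t ∈ Set.Icc (0 : ℝ) τ, M < Real.sqrt n * |S n ω t|})
        Filter.atTop ≤ ENNReal.ofReal δ) :
    ∀ δ : ℝ, 0 < δ →
      Filter.Tendsto (fun n : ℕ =>
        P {ω | ∃ t ∈ Set.Icc (0 : ℝ) τ,
          δ < Real.sqrt n * |R n ω t - B n ω t 0 * (S n ω t - S n ω 0)|})
        Filter.atTop (nhds 0) :=
  decomposition_lemma_general P τ hτ R S A B H0 H1 H2 H3 H4 H5
end
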